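/- arXiv:1705.08410 — 5 statements merged into one kernel-verified Lean document; each statement's English description precedes it below -/
import Mathlib

section
/- Almost surely, sup_{t∈[0,1]} |W^n(t) − W̄(t)| → 0 as n → ∞, where W̄(t) := Γ(X̄)(t) = sup_{0≤s≤t} ((1/μ − 1)(t − s)) and 1/μ := E[ν_1]. (Functional strong law of large numbers for the workload of the transitory queue with uniformly scattered arrivals.) -/
/-!
`X^n = S^n - T^n`, and both pieces converge uniformly on `[0,1]`. For `S^n(t) = A_⌊nt⌋ / n`
with `A_k / k → 1/μ` (strong law), the error `A_k - k/μ` is `o(n)` simultaneously for all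
`k ≤ n`. For `T^n`, the strong law applied to the indicators `1{T_i ≤ q}`, `q` rational, gives
convergence of the empirical distribution function at rational points, which monotonicity
upgrades to uniform convergence to the identity (Glivenko–Cantelli); the order statistic
`T_(j)` is the `j/n`-quantile of that function and so lies within the same distance of `j/n`.
Finally the reflection map `Γ` is 2-Lipschitz for the sup norm, and `Γ(X̄) = W̄`.
-/

open MeasureTheory ProbabilityTheory Filter Set Real
open scoped ENNReal NNReal Classical

/-- The `j`-th order statistic of the values `f 0, …, f (n-1)`, i.e. the `j`-th smallest
value (with the convention that the `0`-th order statistic is `0`). -/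
noncomputable def orderStat (n : ℕ) (f : Fin n → ℝ) (j : ℕ) : ℝ :=
  sInf {x : ℝ | j ≤ (Finset.univ.filter fun i => f i ≤ x).card}

/-- The ordered statistics process `T^n(t) = T_(⌊nt⌋)` built from the first `n` variables
of the sequence `T`. -/
noncomputable def osProc {Ω : Type*} (T : ℕ → Ω → ℝ) (n : ℕ) (t : ℝ) (ω : Ω) : ℝ :=
  orderStat n (fun i => T i.1 ω) ⌊(n : ℝ) * t⌋₊

/-- The scaled service process `S^n(t) = (1/n) ∑_{i=1}^{⌊nt⌋} ν_i`
(job `j ≥ 1` has service time `ν (j-1)`). -/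
noncomputable def sProc {Ω : Type*} (ν : ℕ → Ω → ℝ) (n : ℕ) (t : ℝ) (ω : Ω) : ℝ :=
  (∑ i ∈ Finset.range ⌊(n : ℝ) * t⌋₊, ν i ω) / n

/-- The offered load process `X^n(t) = S^n(t) - T^n(t)`. -/
noncomputable def xProc {Ω : Type*} (T ν : ℕ → Ω → ℝ) (n : ℕ) (t : ℝ) (ω : Ω) : ℝ :=
  sProc ν n t ω - osProc T n t ω

/-- The Skorokhod reflection map `Γ(f)(t) = sup_{0 ≤ s ≤ t} (f t - f s)`. -/
noncomputable def skorokhod (f : ℝ → ℝ) (t : ℝ) : ℝ :=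
  ⨆ s : Set.Icc (0 : ℝ) t, (f t - f s.1)

open Topology

lemma abs_ciSup_sub_ciSup_le {ι : Type*} [Nonempty ι] {u v : ι → ℝ} (hu : BddAbove (range u))
    (hv : BddAbove (range v)) {c : ℝ} (h : ∀ i, |u i - v i| ≤ c) :
    |(⨆ i, u i) - ⨆ i, v i| ≤ c := by
  rw [abs_sub_le_iff, sub_le_iff_le_add, sub_le_iff_le_add]
  constructor
  · exact ciSup_le fun i => by linarith [(abs_le.1 (h i)).2, le_ciSup hv i]
  · exact ciSup_le fun i => by linarith [(abs_le.1 (h i)).1, le_ciSup hu i]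

lemma abs_skorokhod_sub_skorokhod_le {f g : ℝ → ℝ} {t γ : ℝ} (ht : 0 ≤ t)
    (hg : BddBelow (g '' Icc 0 t)) (hfg : ∀ s ∈ Icc 0 t, |f s - g s| ≤ γ) :
    |skorokhod f t - skorokhod g t| ≤ 2 * γ := by
  have : Nonempty (Icc (0 : ℝ) t) := ⟨⟨0, le_rfl, ht⟩⟩
  obtain ⟨b, hb⟩ := hg
  have hgb : ∀ s : Icc (0 : ℝ) t, b ≤ g s := fun s => hb ⟨s, s.2, rfl⟩
  refine abs_ciSup_sub_ciSup_le ⟨f t - b + γ, ?_⟩ ⟨g t - b, ?_⟩ fun s => ?_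
  · rintro _ ⟨s, rfl⟩
    linarith [(abs_le.1 (hfg s s.2)).1, hgb s]
  · rintro _ ⟨s, rfl⟩
    linarith [hgb s]
  · calc |(f t - f s) - (g t - g s)| = |(f t - g t) - (f s - g s)| := by ring_nf
      _ ≤ |f t - g t| + |f s - g s| := abs_sub _ _
      _ ≤ γ + γ := add_le_add (hfg t ⟨ht, le_rfl⟩) (hfg s s.2)
      _ = 2 * γ := by ring

lemma skorokhod_const_mul (c t : ℝ) :
    skorokhod (fun s => c * s) t = ⨆ s : Icc (0 : ℝ) t, c * (t - s.1) := by
  simp only [skorokhod, mul_sub]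

lemma tendsto_iSup_abs_skorokhod_sub_of_tendstoUniformlyOn {f : ℕ → ℝ → ℝ} {c : ℝ}
    (hf : TendstoUniformlyOn f (fun t => c * t) atTop (Icc 0 1)) :
    Tendsto (fun n => ⨆ t : Icc (0 : ℝ) 1,
      |skorokhod (f n) t - ⨆ s : Icc (0 : ℝ) t.1, c * (t.1 - s.1)|) atTop (𝓝 0) := by
  rw [Metric.tendsto_nhds]
  intro ε hε
  filter_upwards [Metric.tendstoUniformlyOn_iff.1 hf (ε / 3) (by positivity)] with n hn
  have hsup : ⨆ t : Icc (0 : ℝ) 1,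
      |skorokhod (f n) t - ⨆ s : Icc (0 : ℝ) t.1, c * (t.1 - s.1)| ≤ 2 * (ε / 3) := by
    refine ciSup_le fun t => ?_
    rw [← skorokhod_const_mul]
    refine abs_skorokhod_sub_skorokhod_le t.2.1
      (isCompact_Icc.image (continuous_const_mul c)).bddBelow fun s hs => ?_
    rw [abs_sub_comm]
    exact (hn s ⟨hs.1, hs.2.trans t.2.2⟩).le
  rw [Real.dist_eq, sub_zero, abs_of_nonneg (Real.iSup_nonneg fun _ => abs_nonneg _)]
  linarith

lemma abs_floor_mul_div_sub_le {x t : ℝ} (hx : 0 < x) (ht : 0 ≤ t) :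
    |⌊x * t⌋₊ / x - t| ≤ 1 / x := by
  have h1 : (⌊x * t⌋₊ : ℝ) ≤ x * t := Nat.floor_le (by positivity)
  have h2 : x * t < ⌊x * t⌋₊ + 1 := Nat.lt_floor_add_one _
  rw [show (⌊x * t⌋₊ : ℝ) / x - t = (⌊x * t⌋₊ - x * t) / x by field_simp, abs_div,
    abs_of_pos hx]
  gcongr
  exact abs_le.2 ⟨by linarith, by linarith⟩

lemma floor_natCast_mul_le {n : ℕ} {t : ℝ} (ht : t ≤ 1) : ⌊(n : ℝ) * t⌋₊ ≤ n := by
  simpa using Nat.floor_le_floor (mul_le_of_le_one_right n.cast_nonneg ht)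

lemma eventually_forall_le_abs_le_mul_of_tendsto_div {B : ℕ → ℝ}
    (hB : Tendsto (fun k : ℕ => B k / k) atTop (𝓝 0)) {ε : ℝ} (hε : 0 < ε) :
    ∀ᶠ n : ℕ in atTop, ∀ k ≤ n, |B k| ≤ ε * n := by
  obtain ⟨K, hK⟩ := eventually_atTop.1 <| (Metric.tendsto_nhds.1 hB ε hε).and
    (eventually_gt_atTop 0)
  set C : ℝ := ∑ k ∈ Finset.range K, |B k|
  filter_upwards [(tendsto_natCast_atTop_atTop (R := ℝ)).eventually_ge_atTop (C / ε)]
    with n hn k hkn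
  have hkn' : (k : ℝ) ≤ n := mod_cast hkn
  rcases lt_or_ge k K with hk | hk
  · calc |B k| ≤ C := Finset.single_le_sum (f := fun k => |B k|) (fun _ _ => abs_nonneg _)
          (Finset.mem_range.2 hk)
      _ ≤ ε * n := by rwa [div_le_iff₀' hε] at hn
  · obtain ⟨hBk, hk0⟩ := hK k hk
    have hk0' : (0 : ℝ) < k := mod_cast hk0
    rw [Real.dist_eq, sub_zero, abs_div, Nat.abs_cast, div_lt_iff₀ hk0'] at hBk
    nlinarith

lemma tendstoUniformlyOn_div_floor_mul {A : ℕ → ℝ} {m : ℝ}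
    (hA : Tendsto (fun k : ℕ => A k / k) atTop (𝓝 m)) :
    TendstoUniformlyOn (fun (n : ℕ) (t : ℝ) => A ⌊(n : ℝ) * t⌋₊ / n) (fun t => m * t) atTop
      (Icc 0 1) := by
  have hB : Tendsto (fun k : ℕ => (A k - m * k) / k) atTop (𝓝 0) := by
    have := hA.sub_const m
    rw [sub_self] at this
    refine this.congr' ?_
    filter_upwards [eventually_gt_atTop 0] with k hk
    field_simp
  rw [Metric.tendstoUniformlyOn_iff]
  intro ε hε
  filter_upwards [eventually_forall_le_abs_le_mul_of_tendsto_div hB (half_pos hε),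
    (tendsto_const_div_atTop_nhds_zero_nat |m|).eventually (gt_mem_nhds (half_pos hε)),
    eventually_gt_atTop 0] with n hAn hmn hn t ht
  have hn' : (0 : ℝ) < n := mod_cast hn
  set j := ⌊(n : ℝ) * t⌋₊
  have hsplit : A j / n - m * t = (A j - m * j) / n + m * (j / n - t) := by
    field_simp
    ring
  rw [Real.dist_eq, abs_sub_comm, hsplit]
  calc |(A j - m * j) / n + m * (j / n - t)|
      ≤ |A j - m * j| / n + |m| * |j / n - t| :=
        (abs_add_le _ _).trans_eq (by rw [abs_div, abs_of_pos hn', abs_mul])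
    _ ≤ ε / 2 * n / n + |m| * (1 / n) := by
        gcongr
        · exact hAn j (floor_natCast_mul_le ht.2)
        · exact abs_floor_mul_div_sub_le hn' ht.1
    _ < ε := by
        rw [mul_div_cancel_right₀ _ hn'.ne', mul_one_div]
        linarith

noncomputable def empCount {n : ℕ} (f : Fin n → ℝ) (x : ℝ) : ℕ :=
  (Finset.univ.filter fun i => f i ≤ x).card

lemma empCount_mono {n : ℕ} (f : Fin n → ℝ) : Monotone (empCount f) := fun _ _ hxy =>
  Finset.card_le_card (Finset.monotone_filter_right _ fun _ _ hi => hi.trans hxy)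

lemma empCount_eq_of_forall_le {n : ℕ} {f : Fin n → ℝ} {x : ℝ} (h : ∀ i, f i ≤ x) :
    empCount f x = n := by
  simp [empCount, h]

lemma abs_orderStat_sub_le {n : ℕ} {f : Fin n → ℝ} (hf : ∀ i, f i ∈ Icc 0 1) (hn : 0 < n)
    {δ : ℝ} (hF : ∀ x ∈ Icc (0 : ℝ) 1, |(empCount f x : ℝ) / n - x| ≤ δ) {j : ℕ} (hj : j ≤ n) :
    |orderStat n f j - j / n| ≤ δ := by
  have hδ : 0 ≤ δ := (abs_nonneg _).trans (hF 0 ⟨le_rfl, zero_le_one⟩)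
  have hn' : (0 : ℝ) < n := mod_cast hn
  have hjn : (j : ℝ) / n ≤ 1 := div_le_one_of_le₀ (mod_cast hj) hn'.le
  rcases Nat.eq_zero_or_pos j with rfl | hj0
  · simp [orderStat, hδ]
  set S := {x : ℝ | j ≤ empCount f x}
  have hS0 : ∀ x ∈ S, 0 ≤ x := fun x hx => by
    obtain ⟨i, hi⟩ := Finset.card_pos.1 (hj0.trans_le hx)
    exact (hf i).1.trans (Finset.mem_filter.1 hi).2
  have h1S : (1 : ℝ) ∈ S := by
    show j ≤ empCount f 1
    rwa [empCount_eq_of_forall_le fun i => (hf i).2]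
  have hlow : (j : ℝ) / n - δ ≤ sInf S := le_csInf ⟨1, h1S⟩ fun x hx => by
    rcases le_or_gt x 1 with hx1 | hx1
    · have : (j : ℝ) / n ≤ empCount f x / n := by gcongr; exact_mod_cast hx
      linarith [(abs_le.1 (hF x ⟨hS0 x hx, hx1⟩)).2]
    · linarith
  have hup : sInf S ≤ j / n + δ := by
    set y := min 1 ((j : ℝ) / n + δ)
    have hyS : y ∈ S := by
      rcases min_cases 1 ((j : ℝ) / n + δ) with ⟨hy, _⟩ | ⟨hy, -⟩
      · rwa [← hy] at h1S
      · have hFy := (abs_le.1 (hF y ⟨by positivity, min_le_left _ _⟩)).1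
        have : (j : ℝ) ≤ empCount f y := by
          rw [← div_le_div_iff_of_pos_right hn']
          linarith
        exact_mod_cast this
    exact (csInf_le ⟨0, hS0⟩ hyS).trans (min_le_right _ _)
  change |sInf S - _| ≤ δ
  rw [abs_le]
  constructor <;> linarith

lemma tendstoUniformlyOn_Icc_id_of_monotone {F : ℕ → ℝ → ℝ} (hmono : ∀ n, Monotone (F n))
    (hlim : ∀ q : ℚ, (q : ℝ) ∈ Icc 0 1 → Tendsto (fun n => F n q) atTop (𝓝 q)) :
    TendstoUniformlyOn F id atTop (Icc 0 1) := by
  rw [Metric.tendstoUniformlyOn_iff]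
  intro ε hε
  obtain ⟨K, hK⟩ := exists_nat_one_div_lt (half_pos hε)
  set L : ℕ := K + 1
  have hL : (0 : ℝ) < L := Nat.cast_pos.2 K.succ_pos
  have hgrid : ∀ᶠ n in atTop, ∀ k ∈ Finset.range (L + 1), |F n (k / L) - k / L| < ε / 2 := by
    rw [eventually_all_finset]
    intro k hk
    have hq : (((k / L : ℚ)) : ℝ) = k / L := by push_cast; rfl
    have hkL : (k : ℝ) ≤ L := mod_cast Nat.lt_succ_iff.1 (Finset.mem_range.1 hk)
    have := hlim (k / L) (by rw [hq]; exact ⟨by positivity, div_le_one_of_le₀ hkL hL.le⟩)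
    rw [hq] at this
    exact (Metric.tendsto_nhds.1 this _ (half_pos hε)).mono fun n hn => by
      rwa [Real.dist_eq] at hn
  filter_upwards [hgrid] with n hn x hx
  have hxL : x * L ≤ L := mul_le_of_le_one_left hL.le hx.2
  have hxL0 : 0 ≤ x * L := mul_nonneg hx.1 hL.le
  set a := ⌊x * L⌋₊
  set b := ⌈x * L⌉₊
  have ha : (a : ℝ) / L ≤ x := by rw [div_le_iff₀ hL]; exact Nat.floor_le hxL0
  have ha' : x < a / L + 1 / L := by
    rw [← add_div, lt_div_iff₀ hL]; exact Nat.lt_floor_add_one _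
  have hb : x ≤ b / L := by rw [le_div_iff₀ hL]; exact Nat.le_ceil _
  have hb' : (b : ℝ) / L < x + 1 / L := by
    rw [div_lt_iff₀ hL, add_mul, one_div_mul_cancel hL.ne']
    exact Nat.ceil_lt_add_one hxL0
  have hFa := (abs_lt.1 (hn a (Finset.mem_range.2 (Nat.lt_succ_of_le (Nat.floor_le_of_le hxL))))).1
  have hFb := (abs_lt.1 (hn b (Finset.mem_range.2 (Nat.lt_succ_of_le (Nat.ceil_le.2 hxL))))).2
  have hK' : 1 / (L : ℝ) < ε / 2 := by simpa [L] using hK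
  rw [Real.dist_eq, id, abs_lt]
  constructor
  · linarith [hmono n hb]
  · linarith [hmono n ha]

lemma tendstoUniformlyOn_orderStat_floor_mul {u : ℕ → ℝ} (hu : ∀ i, u i ∈ Icc 0 1)
    (hlim : ∀ q : ℚ, (q : ℝ) ∈ Icc 0 1 →
      Tendsto (fun n : ℕ => (empCount (fun i : Fin n => u i) q : ℝ) / n) atTop (𝓝 q)) :
    TendstoUniformlyOn (fun (n : ℕ) (t : ℝ) => orderStat n (fun i => u i) ⌊(n : ℝ) * t⌋₊) id
      atTop (Icc 0 1) := by
  have hF := Metric.tendstoUniformlyOn_iff.1 <| tendstoUniformlyOn_Icc_id_of_monotone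
    (F := fun n x => (empCount (fun i : Fin n => u i) x : ℝ) / n)
    (fun n _ _ hxy => div_le_div_of_nonneg_right (mod_cast empCount_mono _ hxy) n.cast_nonneg)
    hlim
  rw [Metric.tendstoUniformlyOn_iff]
  intro ε hε
  filter_upwards [hF (ε / 2) (half_pos hε),
    (tendsto_const_div_atTop_nhds_zero_nat 1).eventually (gt_mem_nhds (half_pos hε)),
    eventually_gt_atTop 0] with n hFn hn1 hn t ht
  have hn' : (0 : ℝ) < n := mod_cast hn
  have hos := abs_orderStat_sub_le (fun i => hu i) hn
    (fun x hx => by rw [abs_sub_comm]; exact (hFn x hx).le) (floor_natCast_mul_le ht.2)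
  rw [Real.dist_eq, id, abs_sub_comm]
  calc _ ≤ |orderStat n (fun i => u i) ⌊(n : ℝ) * t⌋₊ - ⌊(n : ℝ) * t⌋₊ / n|
        + |⌊(n : ℝ) * t⌋₊ / n - t| := abs_sub_le _ _ _
    _ < ε / 2 + ε / 2 := add_lt_add_of_le_of_lt hos
        ((abs_floor_mul_div_sub_le hn' ht.1).trans_lt hn1)
    _ = ε := add_halves ε

lemma ae_tendsto_empCount_div {Ω : Type*} [MeasurableSpace Ω] {P : Measure Ω} [IsFiniteMeasure P]
    {T : ℕ → Ω → ℝ}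
    (hindep : Pairwise (Function.onFun (IndepFun · · P) T))
    (hident : ∀ i, IdentDistrib (T i) (T 0) P P) (x : ℝ) :
    ∀ᵐ ω ∂P, Tendsto (fun n : ℕ => (empCount (fun i : Fin n => T i ω) x : ℝ) / n) atTop
      (𝓝 ((P.map (T 0)).real (Iic x))) := by
  set g : ℝ → ℝ := (Iic x).indicator 1
  have hg : Measurable g := measurable_one.indicator measurableSet_Iic
  have hint : Integrable (g ∘ T 0) P :=
    ((integrable_const 1).indicator measurableSet_Iic).comp_aemeasurable
      (hident 0).aemeasurable_fst
  have hmean : ∫ ω, (g ∘ T 0) ω ∂P = (P.map (T 0)).real (Iic x) :=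
    (integral_map (hident 0).aemeasurable_fst hg.aestronglyMeasurable).symm.trans
      (integral_indicator_one measurableSet_Iic)
  have hlln := strong_law_ae_real (fun i => g ∘ T i) hint
    (fun i j hij => (hindep hij).comp hg hg) fun i => (hident i).comp hg
  rw [hmean] at hlln
  filter_upwards [hlln] with ω hω
  convert hω using 3 with n
  rw [empCount, Finset.card_filter, Nat.cast_sum, ← Fin.sum_univ_eq_sum_range]
  simp [g, Set.indicator_apply]

lemma measureReal_restrict_Icc_Iic {x : ℝ} (hx : x ∈ Icc (0 : ℝ) 1) :
    (volume.restrict (Icc (0 : ℝ) 1)).real (Iic x) = x := by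
  have hinter : Iic x ∩ Icc 0 1 = Icc 0 x :=
    Set.ext fun y => ⟨fun h => ⟨h.2.1, h.1⟩, fun h => ⟨h.2, h.1, h.2.trans hx.2⟩⟩
  rw [measureReal_restrict_apply measurableSet_Iic, hinter, Real.volume_real_Icc_of_le hx.1,
    sub_zero]

theorem workload_fslln_general
    {Ω : Type*} [MeasurableSpace Ω] (P : Measure Ω) [IsProbabilityMeasure P]
    (T ν : ℕ → Ω → ℝ)
    (hTmeas : ∀ i, Measurable (T i))
    (hTindep : iIndepFun T P)
    (hTunif : ∀ i, Measure.map (T i) P = volume.restrict (Set.Icc (0 : ℝ) 1))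
    (hνmeas : ∀ i, Measurable (ν i))
    (hνindep : iIndepFun ν P)
    (hνident : ∀ i, Measure.map (ν i) P = Measure.map (ν 0) P)
    (hmgf : ∀ θ : ℝ, Integrable (fun ω => Real.exp (θ * ν 0 ω)) P) :
    ∀ᵐ ω ∂P,
      Filter.Tendsto
        (fun n : ℕ =>
          ⨆ t : Set.Icc (0 : ℝ) 1,
            |skorokhod (fun s => xProc T ν n s ω) t.1 -
              ⨆ s : Set.Icc (0 : ℝ) t.1, (((∫ x, ν 0 x ∂P) - 1) * (t.1 - s.1))|)
        Filter.atTop (nhds 0) := by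
  have hνint : Integrable (ν 0) P :=
    integrable_of_mem_interior_integrableExpSet (by simp [integrableExpSet, hmgf])
  have hTident (i : ℕ) : IdentDistrib (T i) (T 0) P P :=
    ⟨(hTmeas i).aemeasurable, (hTmeas 0).aemeasurable, (hTunif i).trans (hTunif 0).symm⟩
  have hTcdf : ∀ᵐ ω ∂P, ∀ q : ℚ, (q : ℝ) ∈ Icc 0 1 →
      Tendsto (fun n : ℕ => (empCount (fun i : Fin n => T i ω) q : ℝ) / n) atTop (𝓝 q) := by
    refine ae_all_iff.2 fun q => ?_
    filter_upwards [ae_tendsto_empCount_div (fun i j hij => hTindep.indepFun hij) hTident q]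
      with ω hω hq
    rwa [hTunif 0, measureReal_restrict_Icc_Iic hq] at hω
  have hTmem : ∀ᵐ ω ∂P, ∀ i, T i ω ∈ Icc (0 : ℝ) 1 := ae_all_iff.2 fun i =>
    ae_of_ae_map (hTmeas i).aemeasurable (by rw [hTunif i]; exact ae_restrict_mem measurableSet_Icc)
  filter_upwards [strong_law_ae_real ν hνint (fun i j hij => hνindep.indepFun hij)
    fun i => ⟨(hνmeas i).aemeasurable, (hνmeas 0).aemeasurable, hνident i⟩, hTcdf, hTmem]
    with ω hS hcdf hT
  refine tendsto_iSup_abs_skorokhod_sub_of_tendstoUniformlyOn (f := fun n s => xProc T ν n s ω) ?_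
  refine ((tendstoUniformlyOn_div_floor_mul hS).sub
    (tendstoUniformlyOn_orderStat_floor_mul hT hcdf)).congr_right fun t _ => ?_
  simp only [Pi.sub_apply, id]
  ring

/-- **FSLLN for the workload of the transitory queue.**
If `T 0, T 1, …` are i.i.d. uniform on `[0,1]`, `ν 0, ν 1, …` are i.i.d. strictly positive
with everywhere-finite moment generating function and mean `1/μ = E[ν 0]`, and the two
families are independent, then almost surely
`sup_{t∈[0,1]} |W^n(t) - W̄(t)| → 0`, where `W^n = Γ(X^n)` and
`W̄(t) = sup_{0≤s≤t} ((1/μ - 1)(t - s))`. -/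
theorem workload_fslln
    {Ω : Type*} [MeasurableSpace Ω] (P : Measure Ω) [IsProbabilityMeasure P]
    (T ν : ℕ → Ω → ℝ)
    (hTmeas : ∀ i, Measurable (T i))
    (hTindep : iIndepFun T P)
    (hTunif : ∀ i, Measure.map (T i) P = volume.restrict (Set.Icc (0 : ℝ) 1))
    (hνmeas : ∀ i, Measurable (ν i))
    (hνindep : iIndepFun ν P)
    (hνident : ∀ i, Measure.map (ν i) P = Measure.map (ν 0) P)
    (hνpos : ∀ i, ∀ᵐ ω ∂P, 0 < ν i ω)
    (hmgf : ∀ θ : ℝ, Integrable (fun ω => Real.exp (θ * ν 0 ω)) P)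
    (hTν : IndepFun (fun ω (i : ℕ) => T i ω) (fun ω (i : ℕ) => ν i ω) P) :
    ∀ᵐ ω ∂P,
      Filter.Tendsto
        (fun n : ℕ =>
          ⨆ t : Set.Icc (0 : ℝ) 1,
            |skorokhod (fun s => xProc T ν n s ω) t.1 -
              ⨆ s : Set.Icc (0 : ℝ) t.1, (((∫ x, ν 0 x ∂P) - 1) * (t.1 - s.1))|)
        Filter.atTop (nhds 0) :=
  workload_fslln_general P T ν hTmeas hTindep hTunif hνmeas hνindep hνident hmgf
end

section
/- Fix t ∈ (0,1). For every open set G ⊆ [0,1], liminf_{n→∞} (1/n) log P(T^n(t) ∈ G) ≥ −inf_{x∈G} I_t(x). (Large deviations lower bound for the ordered statistics process of i.i.d. uniform random variables.) -/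
open MeasureTheory ProbabilityTheory Filter Set Real
open scoped ENNReal NNReal Classical

/-- The rate function `I_t(x) = t log(t/x) + (1-t) log((1-t)/(1-x))` on `(0,1)`,
extended by `+∞` outside `(0,1)`. -/
noncomputable def rateI (t x : ℝ) : EReal :=
  if 0 < x ∧ x < 1 then
    ((t * Real.log (t / x) + (1 - t) * Real.log ((1 - t) / (1 - x)) : ℝ) : EReal)
  else ⊤

/-!
Fix `x ∈ G ∩ (0, 1)`, a small interval `(a, b) ∋ x` inside `G`, and let `j = ⌊n t⌋`.
If `j - 1` of the `T_i` fall below `a`, one falls in `(a, b)` and the other `n - j` fall above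
`b`, then `T_(j) ∈ (a, b)`. These configurations are disjoint events indexed by the choice of
indices, so `P(T^n(t) ∈ G) ≥ j C(n, j) a^(j-1) (b - a) (1 - b)^(n-j)`. Comparing
`C(n, j) j^j (n - j)^(n-j)` with the largest term of the binomial expansion of
`n^n = (j + (n - j))^n` gives `log C(n, j) ≥ n H(j / n) - log (n + 1)`, `H` the binary entropy.
Hence the liminf is at least `H(t) + t log a + (1 - t) log (1 - b)`, which tends to `-I_t(x)` as
`(a, b)` shrinks to `x`.
-/

open Topology

section BinomialMaxTerm

variable {n k : ℕ}

lemma choose_mul_sub_le_choose_succ_mul {m : ℕ} (hmk : m < k) :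
    n.choose m * (n - k) ≤ n.choose (m + 1) * k := by
  refine Nat.le_of_mul_le_mul_right ?_ m.succ_pos
  calc n.choose m * (n - k) * (m + 1) = n.choose m * ((n - k) * (m + 1)) := by ring
    _ ≤ n.choose m * ((n - m) * k) :=
        Nat.mul_le_mul_left _ (Nat.mul_le_mul (Nat.sub_le_sub_left hmk.le n) hmk)
    _ = n.choose (m + 1) * k * (m + 1) := by rw [← mul_assoc, ← Nat.choose_succ_right_eq]; ring

lemma choose_succ_mul_le_choose_mul_sub {m : ℕ} (hkm : k ≤ m) :
    n.choose (m + 1) * k ≤ n.choose m * (n - k) := by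
  refine Nat.le_of_mul_le_mul_right ?_ m.succ_pos
  calc n.choose (m + 1) * k * (m + 1) = n.choose m * ((n - m) * k) := by
        rw [← mul_assoc, ← Nat.choose_succ_right_eq]; ring
    _ ≤ n.choose m * ((n - k) * (m + 1)) :=
        Nat.mul_le_mul_left _ (Nat.mul_le_mul (Nat.sub_le_sub_left hkm n) (Nat.le_succ_of_le hkm))
    _ = n.choose m * (n - k) * (m + 1) := by ring

lemma choose_mul_pow_mul_pow_le (hk : k ≤ n) (m : ℕ) :
    n.choose m * k ^ m * (n - k) ^ (n - m) ≤ n.choose k * k ^ k * (n - k) ^ (n - k) := by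
  set f : ℕ → ℕ := fun m => n.choose m * k ^ m * (n - k) ^ (n - m)
  have split : ∀ m < n, f m = n.choose m * (n - k) * (k ^ m * (n - k) ^ (n - (m + 1))) ∧
      f (m + 1) = n.choose (m + 1) * k * (k ^ m * (n - k) ^ (n - (m + 1))) := fun m hm => by
    refine ⟨?_, by simp only [f]; ring⟩
    simp only [f]
    rw [show n - m = n - (m + 1) + 1 by omega]
    ring
  have up : ∀ m < k, f m ≤ f (m + 1) := fun m hm => by
    rw [(split m (hm.trans_le hk)).1, (split m (hm.trans_le hk)).2]
    exact Nat.mul_le_mul_right _ (choose_mul_sub_le_choose_succ_mul hm)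
  have down : ∀ m, k ≤ m → f (m + 1) ≤ f m := fun m hm => by
    rcases lt_or_ge m n with hmn | hmn
    · rw [(split m hmn).1, (split m hmn).2]
      exact Nat.mul_le_mul_right _ (choose_succ_mul_le_choose_mul_sub hm)
    · simp [f, Nat.choose_eq_zero_of_lt (Nat.lt_succ_of_le hmn)]
  rcases le_total m k with hmk | hkm
  · induction hmk using Nat.decreasingInduction with
    | self => exact le_rfl
    | of_succ j hj ih => exact (up j hj).trans ih
  · induction m, hkm using Nat.le_induction with
    | base => exact le_rfl
    | succ m hm ih => exact (down m hm).trans ih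

lemma pow_self_le_succ_mul_choose_mul (hk : k ≤ n) :
    n ^ n ≤ (n + 1) * (n.choose k * k ^ k * (n - k) ^ (n - k)) :=
  calc n ^ n = ∑ m ∈ Finset.range (n + 1), k ^ m * (n - k) ^ (n - m) * n.choose m := by
        simpa only [Nat.cast_id, Nat.add_sub_cancel' hk] using add_pow k (n - k) n
    _ ≤ ∑ _m ∈ Finset.range (n + 1), n.choose k * k ^ k * (n - k) ^ (n - k) :=
        Finset.sum_le_sum fun m _ => by
          rw [mul_comm, ← mul_assoc]; exact choose_mul_pow_mul_pow_le hk m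
    _ = _ := by rw [Finset.sum_const, Finset.card_range, smul_eq_mul]

lemma natCast_mul_binEntropy_div (hk : 0 < k) (hkn : k < n) :
    n * binEntropy (k / n) = n * log n - k * log k - (n - k) * log (n - k) := by
  have hn : (0 : ℝ) < n := by exact_mod_cast hk.trans hkn
  have hk' : (0 : ℝ) < k := by exact_mod_cast hk
  have hnk : (0 : ℝ) < n - k := by rw [sub_pos]; exact_mod_cast hkn
  rw [binEntropy, inv_div, show 1 - (k : ℝ) / n = (n - k) / n by field_simp, inv_div,
    log_div hn.ne' hk'.ne', log_div hn.ne' hnk.ne']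
  field_simp
  ring

lemma natCast_mul_binEntropy_div_sub_log_le_log_choose (hk : 0 < k) (hkn : k < n) :
    n * binEntropy (k / n) - log (n + 1) ≤ log (n.choose k) := by
  have hnat :
      ((n ^ n : ℕ) : ℝ) ≤ ((n + 1) * (n.choose k * k ^ k * (n - k) ^ (n - k)) : ℕ) :=
    Nat.cast_le.mpr (pow_self_le_succ_mul_choose_mul hkn.le)
  have hnk : (0 : ℝ) < (n - k : ℕ) := by exact_mod_cast Nat.sub_pos_of_lt hkn
  have hC : (0 : ℝ) < n.choose k := by exact_mod_cast Nat.choose_pos hkn.le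
  have hk' : (0 : ℝ) < k := by exact_mod_cast hk
  have hn : (0 : ℝ) < n := hk'.trans (by exact_mod_cast hkn)
  push_cast [hkn.le] at hnat hnk
  have hlog := log_le_log (by positivity) hnat
  rw [log_mul (by positivity) (by positivity), log_mul (by positivity) (by positivity),
    log_mul (by positivity) (by positivity), log_pow, log_pow, log_pow] at hlog
  rw [natCast_mul_binEntropy_div hk hkn]
  push_cast [hkn.le] at hlog
  linarith

end BinomialMaxTerm

lemma tendsto_log_natCast_add_one_div :
    Tendsto (fun n : ℕ => log (n + 1) / n) atTop (𝓝 0) := by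
  have h := (tendsto_pow_log_div_mul_add_atTop 1 (-1) 1 one_ne_zero).comp
    (tendsto_atTop_add_const_right _ 1 (tendsto_natCast_atTop_atTop (R := ℝ)))
  simpa [Function.comp_def] using h

lemma le_liminf_inv_mul_log_of_tendsto {p : ℕ → ℝ≥0∞} {u : ℕ → ℝ} {L : ℝ}
    (hu : Tendsto u atTop (𝓝 L))
    (hp : ∀ᶠ n : ℕ in atTop, ENNReal.ofReal (exp (n * u n)) ≤ p n) :
    (L : EReal) ≤
      liminf (fun n : ℕ => (((n : ℝ)⁻¹ : ℝ) : EReal) * ENNReal.log (p n)) atTop := by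
  rw [← (EReal.tendsto_coe.mpr hu).liminf_eq]
  refine liminf_le_liminf ?_
  filter_upwards [hp, eventually_gt_atTop 0] with n hn hn0
  have hn0' : (n : ℝ) ≠ 0 := by positivity
  calc (u n : EReal) = (((n : ℝ)⁻¹ : ℝ) : EReal) * ((n * u n : ℝ) : EReal) := by
        rw [← EReal.coe_mul, inv_mul_cancel_left₀ hn0']
    _ ≤ _ := by
        refine mul_le_mul_of_nonneg_left ?_ (EReal.coe_nonneg.mpr (by positivity))
        rw [← log_exp (n * u n), ← ENNReal.log_ofReal_of_pos (exp_pos _)]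
        exact ENNReal.log_monotone hn

lemma orderStat_eq_of_lt_of_gt {n : ℕ} {f : Fin n → ℝ} {A : Finset (Fin n)} {k : Fin n}
    (hk : k ∉ A) (hlt : ∀ i ∈ A, f i < f k) (hgt : ∀ i ∉ A, i ≠ k → f k < f i) :
    orderStat n f (A.card + 1) = f k := by
  suffices {x : ℝ | A.card + 1 ≤ (Finset.univ.filter fun i => f i ≤ x).card} = Ici (f k) by
    rw [orderStat, this, csInf_Ici]
  ext x
  refine ⟨fun hx => mem_Ici.mpr (not_lt.mp fun hxk => ?_), fun hx => ?_⟩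
  · have : (Finset.univ.filter fun i => f i ≤ x) ⊆ A := fun i hi => by
      by_contra hiA
      have hfi := (Finset.mem_filter.mp hi).2
      rcases eq_or_ne i k with rfl | hik
      · exact hxk.not_ge hfi
      · exact (hxk.trans (hgt i hiA hik)).not_ge hfi
    exact (Finset.card_le_card this).not_gt (Nat.lt_of_succ_le hx)
  · calc A.card + 1 = (insert k A).card := (Finset.card_insert_of_notMem hk).symm
      _ ≤ _ := Finset.card_le_card fun i hi => by
        rcases Finset.mem_insert.mp hi with rfl | hiA
        · simpa using hx
        · simpa using ((hlt i hiA).trans_le hx).le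

def orderCell {n : ℕ} (a b : ℝ) (B : Finset (Fin n)) (k i : Fin n) : Set ℝ :=
  if i ∈ B then Iio a else if i = k then Ioo a b else Ioi b

section OrderCell

variable {n : ℕ} {a b : ℝ} {B B' : Finset (Fin n)} {k k' : Fin n} {f : Fin n → ℝ}

lemma measurableSet_orderCell (i : Fin n) : MeasurableSet (orderCell a b B k i) := by
  unfold orderCell
  split_ifs <;> first | exact measurableSet_Iio | exact measurableSet_Ioo | exact measurableSet_Ioi

lemma orderStat_mem_Ioo_of_mem_orderCell (hk : k ∉ B) (hf : ∀ i, f i ∈ orderCell a b B k i) :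
    orderStat n f (B.card + 1) ∈ Ioo a b := by
  have hfk : f k ∈ Ioo a b := by simpa [orderCell, hk] using hf k
  rw [orderStat_eq_of_lt_of_gt hk]
  · exact hfk
  · intro i hi
    have : f i < a := by simpa [orderCell, hi] using hf i
    exact this.trans hfk.1
  · intro i hi hik
    have : b < f i := by simpa [orderCell, hi, hik] using hf i
    exact hfk.2.trans this

lemma mem_iff_of_mem_orderCell (hab : a ≤ b) (hf : ∀ i, f i ∈ orderCell a b B k i)
    (i : Fin n) :
    i ∈ B ↔ f i < a := by
  have h := hf i
  unfold orderCell at h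
  split_ifs at h with hiB hik
  · simpa [hiB] using h
  · simpa [hiB] using h.1.le
  · simpa [hiB] using hab.trans h.le

lemma eq_iff_of_mem_orderCell (hk : k ∉ B) (hf : ∀ i, f i ∈ orderCell a b B k i) (i : Fin n) :
    i = k ↔ f i ∈ Ioo a b := by
  have h := hf i
  unfold orderCell at h
  split_ifs at h with hiB hik
  · exact iff_of_false (fun hik => hk (hik ▸ hiB)) fun h' => h'.1.not_gt h
  · exact iff_of_true hik h
  · exact iff_of_false hik fun h' => h'.2.not_gt h

lemma eq_of_mem_orderCell (hab : a ≤ b) (hk : k ∉ B) (hk' : k' ∉ B')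
    (hf : ∀ i, f i ∈ orderCell a b B k i) (hf' : ∀ i, f i ∈ orderCell a b B' k' i) :
    B = B' ∧ k = k' :=
  ⟨Finset.ext fun i => (mem_iff_of_mem_orderCell hab hf i).trans
      (mem_iff_of_mem_orderCell hab hf' i).symm,
    (eq_iff_of_mem_orderCell hk' hf' k).mpr ((eq_iff_of_mem_orderCell hk hf k).mp rfl)⟩

lemma prod_orderCell (μ : Measure ℝ) (hk : k ∉ B) :
    ∏ i, μ (orderCell a b B k i) =
      μ (Iio a) ^ B.card * μ (Ioo a b) * μ (Ioi b) ^ (n - (B.card + 1)) := by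
  simp only [orderCell, apply_ite μ]
  rw [Finset.prod_ite, Finset.prod_ite, Finset.filter_filter, Finset.filter_filter]
  have hkB : Finset.univ.filter (fun i => i ∉ B ∧ i = k) = {k} := by
    ext i
    simp only [Finset.mem_filter, Finset.mem_univ, true_and, Finset.mem_singleton]
    exact ⟨And.right, fun hik => ⟨hik ▸ hk, hik⟩⟩
  have hrest : Finset.univ.filter (fun i => i ∉ B ∧ ¬i = k) = (insert k B)ᶜ := by
    ext i; simp [and_comm]
  simp only [Finset.prod_const, Finset.filter_univ_mem, hkB, hrest, Finset.card_singleton,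
    pow_one, Finset.card_compl, Finset.card_insert_of_notMem hk, Fintype.card_fin, mul_assoc]

end OrderCell

section IidOrderStat

variable {Ω : Type*} [MeasurableSpace Ω] {P : Measure Ω} {n : ℕ} {X : Fin n → Ω → ℝ}
  {μ : Measure ℝ} {a b : ℝ}

lemma measure_forall_mem_orderCell (hX : ∀ i, Measurable (X i)) (hind : iIndepFun X P)
    (hμ : ∀ i, P.map (X i) = μ) {B : Finset (Fin n)} {k : Fin n} (hk : k ∉ B) :
    P {ω | ∀ i, X i ω ∈ orderCell a b B k i} =
      μ (Iio a) ^ B.card * μ (Ioo a b) * μ (Ioi b) ^ (n - (B.card + 1)) := by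
  calc P {ω | ∀ i, X i ω ∈ orderCell a b B k i}
      = P (⋂ i, X i ⁻¹' orderCell a b B k i) := by rw [ofPred_forall]; rfl
    _ = ∏ i, P (X i ⁻¹' orderCell a b B k i) :=
        hind.meas_iInter fun i => ⟨_, measurableSet_orderCell i, rfl⟩
    _ = ∏ i, μ (orderCell a b B k i) := Finset.prod_congr rfl fun i _ => by
        rw [← hμ i, Measure.map_apply (hX i) (measurableSet_orderCell i)]
    _ = _ := prod_orderCell μ hk

lemma card_sigma_powersetCard_erase (j : ℕ) :
    (Finset.univ.sigma fun k : Fin n => (Finset.univ.erase k).powersetCard j).card =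
      n * (n - 1).choose j := by
  simp [Finset.card_sigma, Finset.card_erase_of_mem]

theorem mul_choose_mul_le_measure_orderStat_mem_Ioo (hab : a ≤ b)
    (hX : ∀ i, Measurable (X i)) (hind : iIndepFun X P) (hμ : ∀ i, P.map (X i) = μ)
    (j : ℕ) :
    (n * (n - 1).choose j : ℝ≥0∞) *
        (μ (Iio a) ^ j * μ (Ioo a b) * μ (Ioi b) ^ (n - (j + 1))) ≤
      P {ω | orderStat n (fun i => X i ω) (j + 1) ∈ Ioo a b} := by
  set s := Finset.univ.sigma fun k : Fin n => (Finset.univ.erase k).powersetCard j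
  set E : (Σ _ : Fin n, Finset (Fin n)) → Set Ω :=
    fun p => {ω | ∀ i, X i ω ∈ orderCell a b p.2 p.1 i}
  have hmem : ∀ p ∈ s, p.1 ∉ p.2 ∧ p.2.card = j := fun p hp => by
    simp only [s, Finset.mem_sigma, Finset.mem_powersetCard] at hp
    exact ⟨fun h => by simpa using hp.2.1 h, hp.2.2⟩
  have hdisj : (s : Set _).PairwiseDisjoint E := by
    intro p hp q hq hpq
    refine Set.disjoint_left.mpr fun ω hωp hωq => hpq ?_
    obtain ⟨hB, hk⟩ := eq_of_mem_orderCell hab (hmem p hp).1 (hmem q hq).1 hωp hωq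
    exact Sigma.ext hk (heq_of_eq hB)
  calc (n * (n - 1).choose j : ℝ≥0∞) *
        (μ (Iio a) ^ j * μ (Ioo a b) * μ (Ioi b) ^ (n - (j + 1)))
      = ∑ p ∈ s, P (E p) := by
        rw [Finset.sum_congr rfl fun p hp => (hmem p hp).2 ▸
          measure_forall_mem_orderCell hX hind hμ (hmem p hp).1, Finset.sum_const,
          card_sigma_powersetCard_erase, nsmul_eq_mul]
        push_cast; rfl
    _ = P (⋃ p ∈ s, E p) := (measure_biUnion_finset hdisj fun p _ => by
        simp only [E, ofPred_forall]
        exact .iInter fun i => hX i (measurableSet_orderCell i)).symm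
    _ ≤ _ := measure_mono <| iUnion₂_subset fun p hp ω hω => by
        simpa [(hmem p hp).2] using orderStat_mem_Ioo_of_mem_orderCell (hmem p hp).1 hω

end IidOrderStat

section UniformOrderStat

variable {Ω : Type*} [MeasurableSpace Ω] {P : Measure Ω} {T : ℕ → Ω → ℝ}

lemma volume_restrict_Icc_zero_one_Ioo {c d : ℝ} (hc : 0 ≤ c) (hd : d ≤ 1) :
    volume.restrict (Icc (0 : ℝ) 1) (Ioo c d) = ENNReal.ofReal (d - c) := by
  rw [Measure.restrict_apply measurableSet_Ioo,
    inter_eq_left.mpr (Ioo_subset_Icc_self.trans (Icc_subset_Icc hc hd)), Real.volume_Ioo]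

lemma ofReal_le_measure_orderStat_mem_Ioo (hTmeas : ∀ i, Measurable (T i))
    (hTindep : iIndepFun T P)
    (hTunif : ∀ i, Measure.map (T i) P = volume.restrict (Icc (0 : ℝ) 1))
    {a b : ℝ} (ha : 0 ≤ a) (hab : a ≤ b) (hb : b ≤ 1) {n J : ℕ} (hJ : 0 < J) :
    ENNReal.ofReal (J * n.choose J * a ^ (J - 1) * (b - a) * (1 - b) ^ (n - J)) ≤
      P {ω | orderStat n (fun i : Fin n => T i ω) J ∈ Ioo a b} := by
  obtain ⟨j, rfl⟩ : ∃ j, J = j + 1 := ⟨J - 1, by omega⟩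
  set μ := volume.restrict (Icc (0 : ℝ) 1)
  have hcount : (j + 1) * n.choose (j + 1) = n * (n - 1).choose j := by
    cases n with
    | zero => simp
    | succ n => rw [Nat.add_sub_cancel, Nat.add_one_mul_choose_eq, mul_comm]
  calc ENNReal.ofReal (↑(j + 1) * n.choose (j + 1) * a ^ (j + 1 - 1) * (b - a) *
        (1 - b) ^ (n - (j + 1)))
      = ((n * (n - 1).choose j : ℕ) : ℝ≥0∞) * (ENNReal.ofReal (a - 0) ^ j *
          ENNReal.ofReal (b - a) * ENNReal.ofReal (1 - b) ^ (n - (j + 1))) := by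
        rw [← hcount, Nat.add_sub_cancel, sub_zero, ← ENNReal.ofReal_natCast,
          ← ENNReal.ofReal_pow ha, ← ENNReal.ofReal_pow (by linarith), ← ENNReal.ofReal_mul,
          ← ENNReal.ofReal_mul, ← ENNReal.ofReal_mul]
        · congr 1; push_cast; ring
        all_goals positivity
    _ ≤ (n * (n - 1).choose j : ℝ≥0∞) *
          (μ (Iio a) ^ j * μ (Ioo a b) * μ (Ioi b) ^ (n - (j + 1))) := by
        rw [← volume_restrict_Icc_zero_one_Ioo le_rfl (hab.trans hb),
          ← volume_restrict_Icc_zero_one_Ioo ha hb,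
          ← volume_restrict_Icc_zero_one_Ioo (ha.trans hab) le_rfl]
        push_cast
        gcongr
        · exact Ioo_subset_Iio_self
        · exact Ioo_subset_Ioi_self
    _ ≤ _ := by
        simpa using mul_choose_mul_le_measure_orderStat_mem_Ioo hab (fun i => hTmeas i)
          (hTindep.precomp Fin.val_injective) (fun i => hTunif i) j

lemma exp_natCast_mul_binEntropy_add_le {a b : ℝ} (ha : 0 < a) (hab : a < b) (hb : b < 1)
    {n J : ℕ} (hJ : 0 < J) (hJn : J < n) :
    exp (n * binEntropy (J / n) + J * log a + (n - J) * log (1 - b) +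
        (log (b - a) - log a - log (n + 1))) ≤
      J * n.choose J * a ^ (J - 1) * (b - a) * (1 - b) ^ (n - J) := by
  have hC : (0 : ℝ) < n.choose J := by exact_mod_cast Nat.choose_pos hJn.le
  have hJ' : (0 : ℝ) < J := by exact_mod_cast hJ
  have hba : 0 < b - a := sub_pos.mpr hab
  have hb' : 0 < 1 - b := sub_pos.mpr hb
  rw [← le_log_iff_exp_le (by positivity), log_mul (by positivity) (by positivity),
    log_mul (by positivity) (by positivity), log_mul (by positivity) (by positivity),
    log_mul (by positivity) (by positivity), log_pow, log_pow]
  push_cast [Nat.one_le_iff_ne_zero.mpr hJ.ne', hJn.le]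
  have := natCast_mul_binEntropy_div_sub_log_le_log_choose hJ hJn
  have := log_natCast_nonneg J
  linarith

lemma le_liminf_log_measure_osProc_mem (hTmeas : ∀ i, Measurable (T i))
    (hTindep : iIndepFun T P)
    (hTunif : ∀ i, Measure.map (T i) P = volume.restrict (Icc (0 : ℝ) 1))
    {t : ℝ} (ht : t ∈ Ioo (0 : ℝ) 1) {a b : ℝ} (ha : 0 < a) (hab : a < b) (hb : b < 1)
    {G : Set ℝ} (hG : Ioo a b ⊆ G) :
    ((binEntropy t + t * log a + (1 - t) * log (1 - b) : ℝ) : EReal) ≤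
      liminf (fun n : ℕ =>
        (((n : ℝ)⁻¹ : ℝ) : EReal) * ENNReal.log (P {ω | osProc T n t ω ∈ G})) atTop := by
  set J : ℕ → ℕ := fun n => ⌊(n : ℝ) * t⌋₊
  have hρ : Tendsto (fun n : ℕ => (J n : ℝ) / n) atTop (𝓝 t) := by
    simpa [J, mul_comm, Function.comp_def] using
      (tendsto_nat_floor_mul_div_atTop ht.1.le).comp (tendsto_natCast_atTop_atTop (R := ℝ))
  have hrate : Continuous fun p => binEntropy p + p * log a + (1 - p) * log (1 - b) := by
    fun_prop
  have htail : Tendsto (fun n : ℕ => (log (b - a) - log a - log (n + 1)) / n) atTop (𝓝 0) := by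
    simpa [sub_div] using
      (tendsto_const_div_atTop_nhds_zero_nat (log (b - a) - log a)).sub
        tendsto_log_natCast_add_one_div
  refine le_liminf_inv_mul_log_of_tendsto (by simpa using ((hrate.tendsto t).comp hρ).add htail) ?_
  have hJ : Tendsto J atTop atTop := by
    simpa [J, mul_comm] using tendsto_nat_floor_mul_atTop t ht.1
  filter_upwards [hJ.eventually_gt_atTop 0, eventually_gt_atTop 0] with n hJ0 hn0
  have hn : (0 : ℝ) < n := by exact_mod_cast hn0
  have hJn : J n < n := (Nat.floor_lt (mul_pos hn ht.1).le).mpr (mul_lt_of_lt_one_right hn ht.2)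
  calc ENNReal.ofReal (exp (n * _))
      ≤ ENNReal.ofReal
          (J n * n.choose (J n) * a ^ (J n - 1) * (b - a) * (1 - b) ^ (n - J n)) := by
        refine ENNReal.ofReal_le_ofReal (le_of_eq_of_le ?_
          (exp_natCast_mul_binEntropy_add_le ha hab hb hJ0 hJn))
        field_simp
    _ ≤ P {ω | orderStat n (fun i : Fin n => T i ω) (J n) ∈ Ioo a b} :=
        ofReal_le_measure_orderStat_mem_Ioo hTmeas hTindep hTunif ha.le hab.le hb.le hJ0
    _ ≤ P {ω | osProc T n t ω ∈ G} := measure_mono fun ω hω => hG hω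

end UniformOrderStat

section Localization

lemma neg_rateI_eq {t x : ℝ} (ht : t ∈ Ioo (0 : ℝ) 1) (hx : x ∈ Ioo (0 : ℝ) 1) :
    -rateI t x = ((binEntropy t + t * log x + (1 - t) * log (1 - x) : ℝ) : EReal) := by
  rw [rateI, if_pos (show 0 < x ∧ x < 1 from hx), ← EReal.coe_neg, binEntropy,
    log_div ht.1.ne' hx.1.ne', log_div (sub_pos.mpr ht.2).ne' (sub_pos.mpr hx.2).ne',
    log_inv, log_inv]
  ring_nf

lemma mem_nhds_of_isOpen_preimage_val {X : Type*} [TopologicalSpace X] {s G : Set X} {x : X}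
    (hG : IsOpen ((↑) ⁻¹' G : Set s)) (hs : s ∈ 𝓝 x) (hx : x ∈ G) : G ∈ 𝓝 x := by
  obtain ⟨u, hu, hsub⟩ :=
    (mem_nhds_subtype s ⟨x, mem_of_mem_nhds hs⟩ _).mp (hG.mem_nhds (x := ⟨x, _⟩) hx)
  exact mem_of_superset (inter_mem hu hs) fun y hy =>
    hsub (show (⟨y, hy.2⟩ : s) ∈ _ from hy.1)

lemma eventually_Ioo_sub_add_subset {s : Set ℝ} {x : ℝ} (hs : s ∈ 𝓝 x) :
    ∀ᶠ δ in 𝓝[>] 0, Ioo (x - δ) (x + δ) ⊆ s := by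
  obtain ⟨ε, hε, hball⟩ := Metric.mem_nhds_iff.mp hs
  filter_upwards [Ioo_mem_nhdsGT hε] with δ hδ
  rw [← Real.ball_eq_Ioo]
  exact (Metric.ball_subset_ball hδ.2.le).trans hball

lemma tendsto_binEntropy_add_log_sub_add (t : ℝ) {x : ℝ} (hx : x ∈ Ioo (0 : ℝ) 1) :
    Tendsto
      (fun δ => ((binEntropy t + t * log (x - δ) + (1 - t) * log (1 - (x + δ)) : ℝ) : EReal))
      (𝓝 0) (𝓝 ((binEntropy t + t * log x + (1 - t) * log (1 - x) : ℝ) : EReal)) := by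
  refine EReal.tendsto_coe.mpr ?_
  have : ContinuousAt
      (fun δ => binEntropy t + t * log (x - δ) + (1 - t) * log (1 - (x + δ))) 0 := by
    fun_prop (disch := simp; linarith [hx.1, hx.2])
  simpa using this.tendsto

end Localization

theorem orderedStat_LD_lower_general
    {Ω : Type*} [MeasurableSpace Ω] (P : Measure Ω)
    (T : ℕ → Ω → ℝ)
    (hTmeas : ∀ i, Measurable (T i))
    (hTindep : iIndepFun T P)
    (hTunif : ∀ i, Measure.map (T i) P = volume.restrict (Set.Icc (0 : ℝ) 1))
    (t : ℝ) (ht : t ∈ Set.Ioo (0 : ℝ) 1)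
    (G : Set ℝ)
    (hGopen : IsOpen (Subtype.val ⁻¹' G : Set (Set.Icc (0 : ℝ) 1))) :
    -(⨅ x ∈ G, rateI t x) ≤
      Filter.liminf
        (fun n : ℕ =>
          (((n : ℝ)⁻¹ : ℝ) : EReal) * ENNReal.log (P {ω | osProc T n t ω ∈ G}))
        Filter.atTop := by
  rw [EReal.neg_le]
  refine le_iInf₂ fun x hxG => EReal.neg_le_of_neg_le ?_
  by_cases hx : x ∈ Ioo (0 : ℝ) 1
  · have hGx : G ∈ 𝓝 x := mem_nhds_of_isOpen_preimage_val hGopen (Icc_mem_nhds hx.1 hx.2) hxG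
    rw [neg_rateI_eq ht hx]
    refine le_of_tendsto ((tendsto_binEntropy_add_log_sub_add t hx).mono_left
      (nhdsWithin_le_nhds (s := Ioi 0))) ?_
    filter_upwards [eventually_Ioo_sub_add_subset hGx, self_mem_nhdsWithin,
      nhdsWithin_le_nhds (eventually_lt_nhds hx.1),
      nhdsWithin_le_nhds (eventually_lt_nhds (sub_pos.mpr hx.2))] with δ hδG hδ hδx hδx'
    exact le_liminf_log_measure_osProc_mem hTmeas hTindep hTunif ht (by linarith)
      (by linarith [mem_Ioi.mp hδ]) (by linarith) hδG
  · rw [rateI, if_neg (show ¬(0 < x ∧ x < 1) from hx), EReal.neg_top]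
    exact bot_le

/-- **LD lower bound for the ordered statistics process.** For `t ∈ (0,1)` and every
open subset `G` of `[0,1]`,
`liminf (1/n) log P(T^n(t) ∈ G) ≥ -inf_{x ∈ G} I_t(x)`. -/
theorem orderedStat_LD_lower
    {Ω : Type*} [MeasurableSpace Ω] (P : Measure Ω) [IsProbabilityMeasure P]
    (T : ℕ → Ω → ℝ)
    (hTmeas : ∀ i, Measurable (T i))
    (hTindep : iIndepFun T P)
    (hTunif : ∀ i, Measure.map (T i) P = volume.restrict (Set.Icc (0 : ℝ) 1))
    (t : ℝ) (ht : t ∈ Set.Ioo (0 : ℝ) 1)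
    (G : Set ℝ) (hGsub : G ⊆ Set.Icc (0 : ℝ) 1)
    (hGopen : IsOpen (Subtype.val ⁻¹' G : Set (Set.Icc (0 : ℝ) 1))) :
    -(⨅ x ∈ G, rateI t x) ≤
      Filter.liminf
        (fun n : ℕ =>
          (((n : ℝ)⁻¹ : ℝ) : EReal) * ENNReal.log (P {ω | osProc T n t ω ∈ G}))
        Filter.atTop :=
  orderedStat_LD_lower_general P T hTmeas hTindep hTunif t ht G hGopen
end

section
/- Fix t ∈ (0,1) and t < b < 1. For every θ with b/(b−1) < θ < 1 and every n ∈ ℕ with ⌊nt⌋ ≥ 1, the following Chernoff-type bound holds: P(T_{(⌊nt⌋)} > b) ≤ (1−θ)^{−(n+1−⌊nt⌋)} (1 + θ(1−b)/b)^{−⌊nt⌋}. -/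
/-!
`T_(k) > b` exactly when fewer than `k` of `T_1, …, T_n` fall in `[0, b]`, i.e. when a
binomial `(n, b)` count is at most `k - 1`. For `θ < 0`, Chernoff's bound for this lower tail at
the point `s ≤ 0` with `exp s = u / (1 - θ)`, where `u = 1 + θ (1 - b) / b`, evaluates to
`(1 - θ)^{-(n+1-k)} u^{-(k-1)}`, which is at most the claimed bound since `u ≤ 1`.
For `θ ≥ 0` the claimed bound is at least `1`: by `log (1 - θ) ≤ -θ` and `log u ≤ θ (1 - b) / b`
its logarithm is at least `θ ((n + 1 - k) - k (1 - b) / b)`, which is nonnegative as `k ≤ n b`.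
-/

open MeasureTheory ProbabilityTheory Filter Set Real
open scoped ENNReal NNReal Classical

open Finset in
theorem lt_orderStat_iff_card_lt {n k : ℕ} (hk : 1 ≤ k) (hkn : k ≤ n) (f : Fin n → ℝ) (b : ℝ) :
    b < orderStat n f k ↔ #{i | f i ≤ b} < k := by
  set S := {x : ℝ | k ≤ #{i | f i ≤ x}}
  have hne : (univ : Finset (Fin n)).Nonempty := univ_nonempty_iff.2 ⟨⟨0, by omega⟩⟩
  have hS : univ.sup' hne f ∈ S := by
    change k ≤ _
    rwa [filter_true_of_mem fun i _ => le_sup' f (mem_univ i), card_univ, Fintype.card_fin]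
  have hbdd : BddBelow S := by
    refine ⟨univ.inf' hne f, fun x hx => ?_⟩
    obtain ⟨i, hi⟩ := card_pos.1 (lt_of_lt_of_le hk hx)
    exact (inf'_le f (mem_univ i)).trans (mem_filter.1 hi).2
  constructor
  · intro hb
    by_contra! hbS
    exact (csInf_le hbdd hbS).not_gt hb
  · intro hcard
    have habove : ({i | b < f i} : Finset (Fin n)).Nonempty := by
      by_contra! h
      have : #{i | f i ≤ b} = n := by
        rw [filter_true_of_mem fun i _ => ?_, card_univ, Fintype.card_fin]
        by_contra! hi
        exact eq_empty_iff_forall_notMem.1 h i (by simpa using hi)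
      omega
    calc b < inf' _ habove f := (lt_inf'_iff habove).2 fun i hi => (mem_filter.1 hi).2
      _ ≤ sInf S := le_csInf ⟨_, hS⟩ fun x hx => ?_
    -- below the least value exceeding `b`, the count cannot exceed the count at `b`
    by_contra! hxc
    refine (Finset.card_le_card (monotone_filter_right univ fun i _ (hi : f i ≤ x) => ?_)).not_gt
      (hcard.trans_le hx)
    by_contra! hbi
    exact (hi.trans_lt hxc).not_ge (inf'_le f (by simpa using hbi))

theorem mgf_indicator_one {Ω : Type*} [MeasurableSpace Ω] {μ : Measure Ω} [IsProbabilityMeasure μ]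
    {A : Set Ω} (hA : MeasurableSet A) (s : ℝ) :
    mgf (A.indicator 1) μ s = 1 + μ.real A * (exp s - 1) := by
  have hexp : (fun ω => exp (s * A.indicator 1 ω)) =
      fun ω => A.indicator (fun _ => exp s - 1) ω + 1 := by
    ext ω
    by_cases hω : ω ∈ A <;> simp [hω]
  rw [mgf, hexp, integral_add ((integrable_const _).indicator hA) (integrable_const 1),
    integral_indicator_const _ hA]
  simp [add_comm, mul_comm]

open Finset in
theorem measureReal_card_le_le_exp_mul {Ω ι β : Type*} [MeasurableSpace Ω] [MeasurableSpace β]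
    [Fintype ι] {P : Measure Ω} [IsProbabilityMeasure P] {T : ι → Ω → β} (hindep : iIndepFun T P)
    (hmeas : ∀ i, AEMeasurable (T i) P) {A : Set β} (hA : MeasurableSet A) {p : ℝ}
    (hp : ∀ i, (P.map (T i)).real A = p) (m : ℝ) {s : ℝ} (hs : s ≤ 0) :
    P.real {ω | (#{i | T i ω ∈ A} : ℝ) ≤ m} ≤
      exp (-s * m) * (1 + p * (exp s - 1)) ^ Fintype.card ι := by
  set X : ι → Ω → ℝ := fun i => A.indicator 1 ∘ T i
  have hX : ∀ i, AEMeasurable (X i) P := fun i =>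
    (measurable_one.indicator hA).comp_aemeasurable (hmeas i)
  have hcount : ∀ ω, (∑ i, X i) ω = #{i | T i ω ∈ A} := by
    intro ω
    simp [X, Finset.sum_apply, Set.indicator_apply, sum_boole]
  have hmgf : ∀ i, mgf (X i) P s = 1 + p * (exp s - 1) := by
    intro i
    have := Measure.isProbabilityMeasure_map (μ := P) (hmeas i)
    rw [← mgf_map (hmeas i) (by fun_prop), mgf_indicator_one hA, hp]
  have hint : Integrable (fun ω => exp (s * (∑ i, X i) ω)) P := by
    refine .of_mem_Icc 0 1 (by fun_prop) (ae_of_all _ fun ω => ⟨(exp_pos _).le, ?_⟩)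
    rw [exp_le_one_iff, hcount]
    exact mul_nonpos_of_nonpos_of_nonneg hs (Nat.cast_nonneg _)
  calc P.real {ω | (#{i | T i ω ∈ A} : ℝ) ≤ m} = P.real {ω | (∑ i, X i) ω ≤ m} := by
        simp_rw [hcount]
    _ ≤ exp (-s * m) * mgf (∑ i, X i) P s := measure_le_le_exp_mul_mgf m hs hint
    _ = _ := by
        rw [(hindep.comp _ fun _ => measurable_one.indicator hA).mgf_sum₀ hX,
          prod_congr rfl fun i _ => hmgf i, prod_const, card_univ]

theorem volume_restrict_Icc_real_Iic {b : ℝ} (hb0 : 0 ≤ b) (hb1 : b ≤ 1) :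
    (volume.restrict (Icc (0 : ℝ) 1)).real (Iic b) = b := by
  rw [measureReal_restrict_apply measurableSet_Iic, inter_comm, ← Ici_inter_Iic, inter_assoc,
    Iic_inter_Iic, min_eq_right hb1, Ici_inter_Iic,
    volume_real_Icc, max_eq_left (by linarith), sub_zero]

theorem one_le_rpow_neg_mul_rpow_neg {b θ x y : ℝ} (hb0 : 0 < b) (hb1 : b ≤ 1) (hθ0 : 0 ≤ θ)
    (hθ1 : θ < 1) (hy : 0 ≤ y) (hxy : y * (1 - b) ≤ b * x) :
    1 ≤ (1 - θ) ^ (-x) * (1 + θ * (1 - b) / b) ^ (-y) := by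
  have hu : 0 < 1 + θ * (1 - b) / b := by
    have : 0 ≤ θ * (1 - b) / b := div_nonneg (mul_nonneg hθ0 (by linarith)) hb0.le
    linarith
  rw [rpow_def_of_pos (by linarith), rpow_def_of_pos hu, ← exp_add, one_le_exp_iff]
  have h1 := log_le_sub_one_of_pos (show 0 < 1 - θ by linarith)
  have h2 := log_le_sub_one_of_pos hu
  have hx : 0 ≤ x := by nlinarith
  have hθx : y * (θ * (1 - b) / b) ≤ θ * x := by
    rw [mul_div_assoc', div_le_iff₀ hb0]
    nlinarith
  nlinarith [mul_le_mul_of_nonneg_left h1 hx, mul_le_mul_of_nonneg_left h2 hy]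

theorem exp_mul_pow_le_rpow_neg_mul_rpow_neg {a u b : ℝ} (ha : 0 < a) (hu : 0 < u) (hu1 : u ≤ 1)
    (hab : a + b * (u - a) = 1) (n : ℕ) (k : ℝ) :
    exp (-(log u - log a) * (k - 1)) * (1 + b * (exp (log u - log a) - 1)) ^ n ≤
      a ^ (-((n : ℝ) + 1 - k)) * u ^ (-k) := by
  have hbase : 1 + b * (exp (log u - log a) - 1) = exp (-log a) := by
    rw [exp_sub, exp_log hu, exp_log ha, exp_neg, exp_log ha]
    field_simp
    linear_combination hab
  rw [hbase, ← exp_nat_mul, ← exp_add, rpow_def_of_pos ha, rpow_def_of_pos hu, ← exp_add,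
    exp_le_exp]
  nlinarith [log_nonpos hu.le hu1]

open Finset in
theorem toReal_measure_lt_orderStat_le_exp_mul {Ω : Type*} [MeasurableSpace Ω] {P : Measure Ω}
    [IsProbabilityMeasure P] {T : ℕ → Ω → ℝ} (hTindep : iIndepFun T P)
    (hTunif : ∀ i, P.map (T i) = volume.restrict (Icc (0 : ℝ) 1)) {b : ℝ} (hb0 : 0 ≤ b)
    (hb1 : b ≤ 1) {n k : ℕ} (hk : 1 ≤ k) (hkn : k ≤ n) {s : ℝ} (hs : s ≤ 0) :
    (P {ω | b < orderStat n (fun i => T i.1 ω) k}).toReal ≤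
      exp (-s * (k - 1)) * (1 + b * (exp s - 1)) ^ n := by
  have hevent : {ω | b < orderStat n (fun i => T i.1 ω) k} =
      {ω | (#{i : Fin n | T i ω ∈ Iic b} : ℝ) ≤ k - 1} := by
    ext ω
    rw [mem_ofPred_eq, lt_orderStat_iff_card_lt hk hkn, Nat.lt_iff_add_one_le,
      ← Nat.cast_le (α := ℝ), Nat.cast_add_one, ← le_sub_iff_add_le]
    simp
  have hmeas : ∀ i, AEMeasurable (T i) P := fun i =>
    .of_map_ne_zero (by simp [hTunif, Measure.restrict_eq_zero])
  rw [hevent, ← measureReal_def]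
  exact (measureReal_card_le_le_exp_mul (T := fun i : Fin n => T i)
    (hTindep.precomp Fin.val_injective) (fun i => hmeas i) measurableSet_Iic
    (fun i => by rw [hTunif, volume_restrict_Icc_real_Iic hb0 hb1]) _ hs).trans_eq
    (by rw [Fintype.card_fin])

theorem orderedStat_chernoff_upper_tail_general
    {Ω : Type*} [MeasurableSpace Ω] (P : Measure Ω) [IsProbabilityMeasure P]
    (T : ℕ → Ω → ℝ)
    (hTindep : iIndepFun T P)
    (hTunif : ∀ i, Measure.map (T i) P = volume.restrict (Set.Icc (0 : ℝ) 1))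
    (t : ℝ)
    (b : ℝ) (htb : t < b) (hb : b < 1)
    (θ : ℝ) (hθl : b / (b - 1) < θ) (hθu : θ < 1)
    (n : ℕ) (hn : 1 ≤ ⌊(n : ℝ) * t⌋₊) :
    (P {ω | b < orderStat n (fun i => T i.1 ω) ⌊(n : ℝ) * t⌋₊}).toReal ≤
      (1 - θ) ^ (-((n : ℝ) + 1 - (⌊(n : ℝ) * t⌋₊ : ℝ))) *
        (1 + θ * (1 - b) / b) ^ (-(⌊(n : ℝ) * t⌋₊ : ℝ)) := by
  set k := ⌊(n : ℝ) * t⌋₊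
  have hnt : (1 : ℝ) ≤ n * t := by exact_mod_cast (Nat.one_le_floor_iff _).1 hn
  have hb0 : 0 < b := by nlinarith [n.cast_nonneg (α := ℝ)]
  have hkb : (k : ℝ) ≤ n * b := (Nat.floor_le (by linarith)).trans (by gcongr)
  have hkn : k ≤ n := by
    exact_mod_cast hkb.trans (mul_le_of_le_one_right n.cast_nonneg hb.le)
  set u := 1 + θ * (1 - b) / b
  have hu : 0 < u := by
    have : θ * (b - 1) < b := (div_lt_iff_of_neg (by linarith)).1 hθl
    have : 0 < (b + θ * (1 - b)) / b := div_pos (by linarith) hb0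
    rwa [add_div, div_self hb0.ne'] at this
  rcases lt_or_ge θ 0 with hθ | hθ
  · have hu1 : u ≤ 1 := by
      have : θ * (1 - b) / b ≤ 0 := div_nonpos_of_nonpos_of_nonneg (by nlinarith) hb0.le
      linarith
    have hs : log u - log (1 - θ) ≤ 0 := sub_nonpos.2 (log_le_log hu (by linarith))
    refine (toReal_measure_lt_orderStat_le_exp_mul hTindep hTunif hb0.le hb.le hn hkn hs).trans
      (exp_mul_pow_le_rpow_neg_mul_rpow_neg (by linarith) hu hu1 ?_ n k)
    simp only [u]
    field_simp
    ring
  · exact (ENNReal.toReal_le_of_le_ofReal zero_le_one (by simpa using prob_le_one)).trans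
      (one_le_rpow_neg_mul_rpow_neg hb0 hb.le hθ hθu k.cast_nonneg (by nlinarith))

/-- **Chernoff-type bound for the upper tail of a uniform order statistic.**
For `0 < t < b < 1`, `b/(b-1) < θ < 1` and `⌊nt⌋ ≥ 1`,
`P(T_(⌊nt⌋) > b) ≤ (1-θ)^{-(n+1-⌊nt⌋)} (1 + θ(1-b)/b)^{-⌊nt⌋}`. -/
theorem orderedStat_chernoff_upper_tail
    {Ω : Type*} [MeasurableSpace Ω] (P : Measure Ω) [IsProbabilityMeasure P]
    (T : ℕ → Ω → ℝ)
    (hTmeas : ∀ i, Measurable (T i))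
    (hTindep : iIndepFun T P)
    (hTunif : ∀ i, Measure.map (T i) P = volume.restrict (Set.Icc (0 : ℝ) 1))
    (t : ℝ) (ht : t ∈ Set.Ioo (0 : ℝ) 1)
    (b : ℝ) (htb : t < b) (hb : b < 1)
    (θ : ℝ) (hθl : b / (b - 1) < θ) (hθu : θ < 1)
    (n : ℕ) (hn : 1 ≤ ⌊(n : ℝ) * t⌋₊) :
    (P {ω | b < orderStat n (fun i => T i.1 ω) ⌊(n : ℝ) * t⌋₊}).toReal ≤
      (1 - θ) ^ (-((n : ℝ) + 1 - (⌊(n : ℝ) * t⌋₊ : ℝ))) *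
        (1 + θ * (1 - b) / b) ^ (-(⌊(n : ℝ) * t⌋₊ : ℝ)) :=
  orderedStat_chernoff_upper_tail_general P T hTindep hTunif t b htb hb θ hθl hθu n hn
end

section
/- Fix t ∈ (0,1] and a partition 0 = t_0 < t_1 < … < t_d = t. For every λ = (λ_1,…,λ_{d+1}) ∈ ℝ^{d+1} with max_{1≤i≤d} λ_i + λ_{d+1} < 1 and λ_{d+1} < 1, lim_{n→∞} (1/n) log E[ exp( ∑_{i=1}^d λ_i (Z_{⌊n t_i⌋} − Z_{⌊n t_{i−1}⌋}) + λ_{d+1} Z_{n+1} ) ] = −∑_{i=1}^d (t_i − t_{i−1}) log(1 − λ_i − λ_{d+1}) − (1 − t) log(1 − λ_{d+1}). -/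
/-!
With `μ = λ_{d+1}` and `a i = ⌊n τ_i⌋`, the exponent is `∑_{k ≤ n} c_k E_k`, where `c_k = λ_i + μ`
on the block `a (i-1) ≤ k < a i` and `c_k = μ` beyond the last block. Independence and
`E[exp (c E)] = (1 - c)⁻¹` for `c < 1` make the log-moment generating function exactly
`-(n+1) log (1-μ) - ∑_i (a i - a (i-1)) (log (1 - λ_i - μ) - log (1 - μ))`,
and `a i / n → τ_i`.
-/

open MeasureTheory ProbabilityTheory Filter Set Real

theorem integral_exp_mul_expMeasure_one {c : ℝ} (hc : c < 1) :
    ∫ x, exp (c * x) ∂expMeasure 1 = (1 - c)⁻¹ := by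
  have h1c : 0 < 1 - c := by linarith
  have hdensity : ∀ x, exponentialPDF 1 x * ENNReal.ofReal (exp (c * x))
      = ENNReal.ofReal (1 - c)⁻¹ * exponentialPDF (1 - c) x := by
    intro x
    rcases le_or_gt 0 x with hx | hx
    · rw [exponentialPDF_of_nonneg hx, exponentialPDF_of_nonneg hx,
        ← ENNReal.ofReal_mul (by positivity), ← ENNReal.ofReal_mul (by positivity),
        inv_mul_cancel_left₀ h1c.ne', one_mul, ← exp_add]
      ring_nf
    · rw [exponentialPDF_of_neg hx, exponentialPDF_of_neg hx, zero_mul, mul_zero]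
  have hpdf : ∀ r, Measurable (exponentialPDF r) := fun r =>
    (measurable_exponentialPDFReal r).ennreal_ofReal
  rw [integral_eq_lintegral_of_nonneg_ae (ae_of_all _ fun x => (exp_pos _).le)
      (by fun_prop), show expMeasure 1 = volume.withDensity (exponentialPDF 1) from rfl,
    lintegral_withDensity_eq_lintegral_mul _ (hpdf 1) (by fun_prop)]
  simp only [Pi.mul_apply, hdensity]
  rw [lintegral_const_mul _ (hpdf _), lintegral_exponentialPDF_eq_one h1c, mul_one,
    ENNReal.toReal_ofReal (by positivity)]

theorem integral_exp_sum_mul_of_iIndepFun {Ω ι : Type*} [MeasurableSpace Ω] {P : Measure Ω}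
    {E : ι → Ω → ℝ} (hEmeas : ∀ i, Measurable (E i)) (hEindep : iIndepFun E P)
    (hEexp : ∀ i, Measure.map (E i) P = expMeasure 1) (s : Finset ι) {c : ι → ℝ}
    (hc : ∀ k ∈ s, c k < 1) :
    ∫ ω, exp (∑ k ∈ s, c k * E k ω) ∂P = ∏ k ∈ s, (1 - c k)⁻¹ := by
  have hmgf := (hEindep.comp (fun k x => c k * x) fun k => measurable_const_mul (c k)).mgf_sum
    (fun k => (hEmeas k).const_mul (c k)) s (t := 1)
  simp only [mgf, Finset.sum_apply, one_mul, Function.comp_def] at hmgf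
  rw [hmgf]
  refine Finset.prod_congr rfl fun k hk => ?_
  rw [← integral_map (f := fun x => exp (c k * x)) (hEmeas k).aemeasurable (by fun_prop), hEexp k,
    integral_exp_mul_expMeasure_one (hc k hk)]

def blockCoeff (a : ℕ → ℕ) (lam : ℕ → ℝ) (d k : ℕ) : ℝ :=
  ∑ i ∈ Finset.Icc 1 d, if k ∈ Finset.Ico (a (i - 1)) (a i) then lam i else 0

section blockCoeff

variable {a : ℕ → ℕ} {d : ℕ}

theorem sum_mul_sub_sum_range_eq_sum_blockCoeff_mul (ha : MonotoneOn a (Iic d)) {m : ℕ}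
    (hm : a d ≤ m) (lam x : ℕ → ℝ) :
    ∑ i ∈ Finset.Icc 1 d,
        lam i * (∑ k ∈ Finset.range (a i), x k - ∑ k ∈ Finset.range (a (i - 1)), x k)
      = ∑ k ∈ Finset.range m, blockCoeff a lam d k * x k := by
  simp only [blockCoeff, Finset.sum_mul, ite_mul, zero_mul]
  rw [Finset.sum_comm]
  refine Finset.sum_congr rfl fun i hi => ?_
  obtain ⟨hi1, hid⟩ := Finset.mem_Icc.mp hi
  have hle : a (i - 1) ≤ a i := ha (mem_Iic.mpr (by omega)) (mem_Iic.mpr hid) (by omega)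
  have hsub : Finset.Ico (a (i - 1)) (a i) ⊆ Finset.range m := fun k hk => by
    have := ha (mem_Iic.mpr hid) (mem_Iic.mpr le_rfl) hid
    simp only [Finset.mem_Ico, Finset.mem_range] at hk ⊢
    omega
  rw [Finset.sum_ite_mem, Finset.inter_eq_right.mpr hsub, ← Finset.sum_Ico_eq_sub _ hle,
    Finset.mul_sum]

theorem sum_range_blockCoeff (ha : MonotoneOn a (Iic d)) {m : ℕ} (hm : a d ≤ m)
    (lam : ℕ → ℝ) :
    ∑ k ∈ Finset.range m, blockCoeff a lam d k
      = ∑ i ∈ Finset.Icc 1 d, ((a i : ℝ) - a (i - 1)) * lam i := by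
  simpa [mul_comm] using (sum_mul_sub_sum_range_eq_sum_blockCoeff_mul ha hm lam fun _ => 1).symm

theorem blockCoeff_eq_zero_or_exists (ha : MonotoneOn a (Iic d)) (k : ℕ) :
    (∀ lam, blockCoeff a lam d k = 0) ∨
      ∃ i ∈ Finset.Icc 1 d, ∀ lam, blockCoeff a lam d k = lam i := by
  by_cases h : ∃ i ∈ Finset.Icc 1 d, k ∈ Finset.Ico (a (i - 1)) (a i)
  · obtain ⟨i, hi, hki⟩ := h
    refine Or.inr ⟨i, hi, fun lam => ?_⟩
    rw [blockCoeff, Finset.sum_eq_single_of_mem i hi fun j hj hji => if_neg ?_, if_pos hki]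
    simp only [Finset.mem_Icc, Finset.mem_Ico] at hi hj hki ⊢
    rcases hji.lt_or_gt with hlt | hgt
    · have := ha (mem_Iic.mpr hj.2) (mem_Iic.mpr (by omega)) (by omega : j ≤ i - 1)
      omega
    · have := ha (mem_Iic.mpr hi.2) (mem_Iic.mpr (by omega)) (by omega : i ≤ j - 1)
      omega
  · push Not at h
    exact Or.inl fun lam => Finset.sum_eq_zero fun i hi => if_neg (h i hi)

theorem blockCoeff_add_lt_one (ha : MonotoneOn a (Iic d)) {lam : ℕ → ℝ} {μ : ℝ}
    (hlam : ∀ i ∈ Finset.Icc 1 d, lam i + μ < 1) (hμ : μ < 1) (k : ℕ) :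
    blockCoeff a lam d k + μ < 1 := by
  rcases blockCoeff_eq_zero_or_exists ha k with h | ⟨i, hi, h⟩
  · rwa [h, zero_add]
  · rw [h]
    exact hlam i hi

theorem apply_blockCoeff_add (ha : MonotoneOn a (Iic d)) (f : ℝ → ℝ) (lam : ℕ → ℝ) (μ : ℝ)
    (k : ℕ) :
    f (blockCoeff a lam d k + μ) = f μ + blockCoeff a (fun i => f (lam i + μ) - f μ) d k := by
  rcases blockCoeff_eq_zero_or_exists ha k with h | ⟨i, hi, h⟩
  · rw [h, h, zero_add, add_zero]
  · rw [h, h, add_sub_cancel]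

end blockCoeff

theorem log_integral_exp_sum_increments {Ω : Type*} [MeasurableSpace Ω] {P : Measure Ω}
    {E : ℕ → Ω → ℝ} (hEmeas : ∀ i, Measurable (E i)) (hEindep : iIndepFun E P)
    (hEexp : ∀ i, Measure.map (E i) P = expMeasure 1) {a : ℕ → ℕ} {d m : ℕ}
    (ha : MonotoneOn a (Iic d)) (hm : a d ≤ m) {lam : ℕ → ℝ} {μ : ℝ}
    (hlam : ∀ i ∈ Finset.Icc 1 d, lam i + μ < 1) (hμ : μ < 1) :
    log (∫ ω, exp (∑ i ∈ Finset.Icc 1 d,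
          lam i * (∑ k ∈ Finset.range (a i), E k ω - ∑ k ∈ Finset.range (a (i - 1)), E k ω) +
        μ * ∑ k ∈ Finset.range m, E k ω) ∂P)
      = -(m * log (1 - μ) + ∑ i ∈ Finset.Icc 1 d,
          ((a i : ℝ) - a (i - 1)) * (log (1 - lam i - μ) - log (1 - μ))) := by
  have hc := blockCoeff_add_lt_one ha hlam hμ
  simp_rw [sum_mul_sub_sum_range_eq_sum_blockCoeff_mul ha hm, Finset.mul_sum,
    ← Finset.sum_add_distrib, ← add_mul]
  rw [integral_exp_sum_mul_of_iIndepFun hEmeas hEindep hEexp _ fun k _ => hc k,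
    log_prod fun k _ => inv_ne_zero (sub_pos.mpr (hc k)).ne']
  simp_rw [log_inv, apply_blockCoeff_add ha (fun s => log (1 - s)), ← sub_sub]
  rw [Finset.sum_neg_distrib, Finset.sum_add_distrib, Finset.sum_const, Finset.card_range,
    sum_range_blockCoeff ha hm, nsmul_eq_mul]

theorem Finset.sum_Icc_one_sub_pred {M : Type*} [AddCommGroup M] (f : ℕ → M) (d : ℕ) :
    ∑ i ∈ Finset.Icc 1 d, (f i - f (i - 1)) = f d - f 0 := by
  induction d with
  | zero => simp
  | succ d ih =>
    rw [Finset.sum_Icc_succ_top (by omega), ih, Nat.add_sub_cancel, sub_add_sub_cancel']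

theorem tendsto_inv_mul_floor_mul {r : ℝ} (hr : 0 ≤ r) :
    Tendsto (fun n : ℕ => (n : ℝ)⁻¹ * ⌊n * r⌋₊) atTop (nhds r) := by
  simpa [Function.comp_def, mul_comm, div_eq_inv_mul] using
    (tendsto_nat_floor_mul_div_atTop hr).comp (tendsto_natCast_atTop_atTop (R := ℝ))

theorem tendsto_inv_mul_add_one :
    Tendsto (fun n : ℕ => (n : ℝ)⁻¹ * (n + 1)) atTop (nhds 1) := by
  have h := tendsto_const_nhds (x := (1 : ℝ)).add tendsto_inv_atTop_nhds_zero_nat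
  rw [add_zero] at h
  refine h.congr' ((eventually_gt_atTop 0).mono fun n hn => ?_)
  field_simp

theorem tendsto_inv_mul_add_one_mul_add_sum_floor_sub {τ : ℕ → ℝ} {d : ℕ}
    (hτ : ∀ i ≤ d, 0 ≤ τ i) (A : ℝ) (w : ℕ → ℝ) :
    Tendsto (fun n : ℕ => (n : ℝ)⁻¹ * -((n + 1 : ℕ) * A +
        ∑ i ∈ Finset.Icc 1 d, ((⌊(n : ℝ) * τ i⌋₊ : ℝ) - ⌊(n : ℝ) * τ (i - 1)⌋₊) * w i))
      atTop (nhds (-(A + ∑ i ∈ Finset.Icc 1 d, (τ i - τ (i - 1)) * w i))) := by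
  have hblock : ∀ i ∈ Finset.Icc 1 d, Tendsto
      (fun n : ℕ => (n : ℝ)⁻¹ * ((⌊(n : ℝ) * τ i⌋₊ : ℝ) - ⌊(n : ℝ) * τ (i - 1)⌋₊))
      atTop (nhds (τ i - τ (i - 1))) := fun i hi => by
    have hid := (Finset.mem_Icc.mp hi).2
    simpa only [mul_sub] using (tendsto_inv_mul_floor_mul (hτ i hid)).sub
      (tendsto_inv_mul_floor_mul (hτ (i - 1) (by omega)))
  have h := ((tendsto_inv_mul_add_one.mul_const A).add
    (tendsto_finsetSum _ fun i hi => (hblock i hi).mul_const (w i))).neg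
  rw [one_mul] at h
  refine h.congr fun n => ?_
  simp only [mul_neg, mul_add _ _ (Finset.sum _ _), Finset.mul_sum, mul_assoc,
    Nat.cast_add_one]

theorem erlang_increments_cumulant_limit_general
    {Ω : Type*} [MeasurableSpace Ω] (P : Measure Ω)
    (E : ℕ → Ω → ℝ)
    (hEmeas : ∀ i, Measurable (E i))
    (hEindep : iIndepFun E P)
    (hEexp : ∀ i, Measure.map (E i) P = expMeasure 1)
    (t : ℝ) (ht : t ∈ Set.Ioc (0 : ℝ) 1)
    (d : ℕ)
    (τ : ℕ → ℝ) (hτ0 : τ 0 = 0) (hτd : τ d = t)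
    (hτmono : ∀ i < d, τ i < τ (i + 1))
    (lam : ℕ → ℝ)
    (hlam : ∀ i ∈ Finset.Icc 1 d, lam i + lam (d + 1) < 1)
    (hlamd : lam (d + 1) < 1) :
    Filter.Tendsto
      (fun n : ℕ =>
        (n : ℝ)⁻¹ *
          Real.log
            (∫ ω,
              Real.exp
                ((∑ i ∈ Finset.Icc 1 d,
                    lam i *
                      ((∑ k ∈ Finset.range ⌊(n : ℝ) * τ i⌋₊, E k ω) -
                        ∑ k ∈ Finset.range ⌊(n : ℝ) * τ (i - 1)⌋₊, E k ω)) +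
                  lam (d + 1) * ∑ k ∈ Finset.range (n + 1), E k ω) ∂P))
      Filter.atTop
      (nhds
        (-(∑ i ∈ Finset.Icc 1 d,
              (τ i - τ (i - 1)) * Real.log (1 - lam i - lam (d + 1))) -
          (1 - t) * Real.log (1 - lam (d + 1)))) := by
  have hτ : MonotoneOn τ (Iic d) := monotoneOn_of_le_succ ordConnected_Iic
    fun i _ _ hi => (hτmono i (Order.succ_le_iff.mp hi)).le
  have hτnonneg : ∀ i ≤ d, 0 ≤ τ i := fun i hi =>
    hτ0 ▸ hτ (mem_Iic.mpr d.zero_le) (mem_Iic.mpr hi) i.zero_le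
  set μ := lam (d + 1)
  set w : ℕ → ℝ := fun i => log (1 - lam i - μ) - log (1 - μ)
  have hfloor : ∀ n : ℕ, MonotoneOn (fun i => ⌊(n : ℝ) * τ i⌋₊) (Iic d) :=
    fun n i hi j hj hij =>
      Nat.floor_le_floor (mul_le_mul_of_nonneg_left (hτ hi hj hij) n.cast_nonneg)
  have hfloor_le : ∀ n : ℕ, ⌊(n : ℝ) * τ d⌋₊ ≤ n + 1 := fun n => by
    refine (Nat.floor_le_floor (mul_le_of_le_one_right n.cast_nonneg (hτd ▸ ht.2))).trans ?_
    rw [Nat.floor_natCast]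
    omega
  have htarget : -(∑ i ∈ Finset.Icc 1 d, (τ i - τ (i - 1)) * log (1 - lam i - μ)) -
      (1 - t) * log (1 - μ) = -(log (1 - μ) + ∑ i ∈ Finset.Icc 1 d, (τ i - τ (i - 1)) * w i) := by
    have htel : ∑ i ∈ Finset.Icc 1 d, (τ i - τ (i - 1)) = t := by
      rw [Finset.sum_Icc_one_sub_pred, hτ0, hτd, sub_zero]
    simp only [w, mul_sub, Finset.sum_sub_distrib, ← Finset.sum_mul, htel]
    ring
  rw [htarget]
  refine (tendsto_inv_mul_add_one_mul_add_sum_floor_sub hτnonneg _ w).congr fun n => ?_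
  rw [log_integral_exp_sum_increments hEmeas hEindep hEexp (hfloor n) (hfloor_le n) hlam hlamd]

/-- **Limiting scaled cumulant generating function of the increments of Erlang sums.**
Let `E 0, E 1, …` be i.i.d. mean-one exponentials, `Z m = ∑_{i<m} E i`, `t ∈ (0,1]`
and `0 = τ 0 < τ 1 < ⋯ < τ d = t` a partition. For `λ 1, …, λ (d+1)` with
`λ i + λ (d+1) < 1` for `1 ≤ i ≤ d` and `λ (d+1) < 1`,
`(1/n) log E[exp(∑_{i=1}^d λ i (Z_{⌊n τ i⌋} - Z_{⌊n τ (i-1)⌋}) + λ (d+1) Z_{n+1})]`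
converges to
`-∑_{i=1}^d (τ i - τ (i-1)) log(1 - λ i - λ (d+1)) - (1-t) log(1 - λ (d+1))`. -/
theorem erlang_increments_cumulant_limit
    {Ω : Type*} [MeasurableSpace Ω] (P : Measure Ω) [IsProbabilityMeasure P]
    (E : ℕ → Ω → ℝ)
    (hEmeas : ∀ i, Measurable (E i))
    (hEindep : iIndepFun E P)
    (hEexp : ∀ i, Measure.map (E i) P = expMeasure 1)
    (t : ℝ) (ht : t ∈ Set.Ioc (0 : ℝ) 1)
    (d : ℕ) (hd : 1 ≤ d)
    (τ : ℕ → ℝ) (hτ0 : τ 0 = 0) (hτd : τ d = t)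
    (hτmono : ∀ i < d, τ i < τ (i + 1))
    (lam : ℕ → ℝ)
    (hlam : ∀ i ∈ Finset.Icc 1 d, lam i + lam (d + 1) < 1)
    (hlamd : lam (d + 1) < 1) :
    Filter.Tendsto
      (fun n : ℕ =>
        (n : ℝ)⁻¹ *
          Real.log
            (∫ ω,
              Real.exp
                ((∑ i ∈ Finset.Icc 1 d,
                    lam i *
                      ((∑ k ∈ Finset.range ⌊(n : ℝ) * τ i⌋₊, E k ω) -
                        ∑ k ∈ Finset.range ⌊(n : ℝ) * τ (i - 1)⌋₊, E k ω)) +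
                  lam (d + 1) * ∑ k ∈ Finset.range (n + 1), E k ω) ∂P))
      Filter.atTop
      (nhds
        (-(∑ i ∈ Finset.Icc 1 d,
              (τ i - τ (i - 1)) * Real.log (1 - lam i - lam (d + 1))) -
          (1 - t) * Real.log (1 - lam (d + 1)))) :=
  erlang_increments_cumulant_limit_general P E hEmeas hEindep hEexp t ht d τ hτ0 hτd hτmono lam hlam
    hlamd
end

section
/- Let d = 1 and let the partition of [0,t] consist of the single point t_1 = t ∈ (0,1). Then for every y ∈ (0,1), inf { Λ_j^*(x) : x ∈ ℝ^2, x_1/(x_1 + x_2) = y } = t_1 log(t_1/y) + (1 − t_1) log((1 − t_1)/(1 − y)), i.e., the increments rate function Λ̂_j coincides with I_{t_1} on (0,1). -/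
open MeasureTheory ProbabilityTheory Filter Set Real
open scoped ENNReal NNReal Classical

/-- The Legendre-type transform `Λ_j^*` for the one-point partition `{t₁}` of `[0,t₁]`:
`Λ_j^*(x₁,x₂) = sup { (λ₁+λ₂)x₁ + t₁ log(1-λ₁-λ₂) + λ₂ x₂ + (1-t₁) log(1-λ₂) :
λ₁+λ₂ < 1, λ₂ < 1 }`. -/
noncomputable def lamJStarOne (t₁ : ℝ) (x : ℝ × ℝ) : EReal :=
  ⨆ l ∈ {l : ℝ × ℝ | l.1 + l.2 < 1 ∧ l.2 < 1},
    (((l.1 + l.2) * x.1 + t₁ * Real.log (1 - l.1 - l.2) + l.2 * x.2 +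
        (1 - t₁) * Real.log (1 - l.2) : ℝ) : EReal)

private lemma aux_ineq (t a μ : ℝ) (ht : 0 < t) (ha : 0 < a) (hμ : μ < 1) :
    μ * a + t * Real.log (1 - μ) ≤ a - t + t * Real.log (t / a) := by
  have h1 : (0:ℝ) < 1 - μ := by linarith
  have hq : (0:ℝ) < (1 - μ) * a / t := by positivity
  have key : Real.log ((1 - μ) * a / t) ≤ (1 - μ) * a / t - 1 :=
    Real.log_le_sub_one_of_pos hq
  have hlog : Real.log (1 - μ) = Real.log ((1 - μ) * a / t) + Real.log (t / a) := by
    rw [← Real.log_mul (ne_of_gt hq) (by positivity)]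
    congr 1
    field_simp
  rw [hlog]
  have h2 := mul_le_mul_of_nonneg_left key ht.le
  have ht' : t * ((1 - μ) * a / t) = (1 - μ) * a := by field_simp
  nlinarith [h2, ht']

/-- **The one-increment rate function coincides with `I_{t₁}`.** For `t₁ ∈ (0,1)` and
`y ∈ (0,1)`,
`inf { Λ_j^*(x) : x ∈ ℝ², x₁/(x₁+x₂) = y } = t₁ log(t₁/y) + (1-t₁) log((1-t₁)/(1-y))`. -/
theorem lamJStarOne_constrained_inf
    (t₁ : ℝ) (ht : t₁ ∈ Set.Ioo (0 : ℝ) 1)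
    (y : ℝ) (hy : y ∈ Set.Ioo (0 : ℝ) 1) :
    (⨅ x ∈ {x : ℝ × ℝ | x.1 / (x.1 + x.2) = y}, lamJStarOne t₁ x) =
      ((t₁ * Real.log (t₁ / y) + (1 - t₁) * Real.log ((1 - t₁) / (1 - y)) : ℝ) : EReal) := by
  obtain ⟨ht0, ht1⟩ := ht
  obtain ⟨hy0, hy1⟩ := hy
  apply le_antisymm
  · -- upper bound: evaluate at x = (y, 1-y)
    have hmem : ((y, 1 - y) : ℝ × ℝ) ∈ {x : ℝ × ℝ | x.1 / (x.1 + x.2) = y} := by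
      have h1 : y + (1 - y) = 1 := by ring
      simp [Set.mem_setOf_eq, h1]
    refine le_trans (iInf₂_le _ hmem) ?_
    refine iSup₂_le fun l hl => ?_
    obtain ⟨h1, h2⟩ := hl
    rw [EReal.coe_le_coe_iff]
    dsimp only
    have A := aux_ineq t₁ y (l.1 + l.2) ht0 hy0 h1
    have B := aux_ineq (1 - t₁) (1 - y) l.2 (by linarith) (by linarith) h2
    have hr : (1 : ℝ) - l.1 - l.2 = 1 - (l.1 + l.2) := by ring
    rw [hr]
    linarith
  · refine le_iInf₂ fun x hx => ?_
    simp only [Set.mem_setOf_eq] at hx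
    have hs : x.1 + x.2 ≠ 0 := by
      intro h
      rw [h, div_zero] at hx
      linarith
    rw [div_eq_iff hs] at hx
    rcases lt_or_gt_of_ne hs with hneg | hpos
    · -- negative sum: sup is +∞, pick a suitable λ
      have hx1neg : x.1 < 0 := by
        rw [hx]; exact mul_neg_of_pos_of_neg hy0 hneg
      set I : ℝ := t₁ * Real.log (t₁ / y) + (1 - t₁) * Real.log ((1 - t₁) / (1 - y)) with hI
      set c := min 0 (I / x.1) with hc
      have hc0 : c ≤ 0 := min_le_left _ _
      have hmem : ((c, 0) : ℝ × ℝ) ∈ {l : ℝ × ℝ | l.1 + l.2 < 1 ∧ l.2 < 1} := by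
        constructor
        · show c + 0 < 1; linarith
        · show (0:ℝ) < 1; norm_num
      refine le_iSup₂_of_le (c, 0) hmem ?_
      rw [EReal.coe_le_coe_iff]
      dsimp only
      have h1 : I ≤ c * x.1 := by
        have h := mul_le_mul_of_nonpos_right (min_le_right 0 (I / x.1)) hx1neg.le
        rw [div_mul_cancel₀ _ (ne_of_lt hx1neg)] at h
        exact h
      have h2 : 0 ≤ Real.log (1 - c - 0) := Real.log_nonneg (by linarith)
      have h3 : (0:ℝ) ≤ t₁ * Real.log (1 - c - 0) := mul_nonneg ht0.le h2
      have h4 : Real.log (1 - (0:ℝ)) = 0 := by norm_num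
      rw [h4]
      nlinarith
    · -- positive sum
      have hx1 : 0 < x.1 := by rw [hx]; exact mul_pos hy0 hpos
      have hx2eq : x.2 = (1 - y) * (x.1 + x.2) := by linear_combination -hx
      have hx2 : 0 < x.2 := by
        rw [hx2eq]; exact mul_pos (by linarith) hpos
      refine le_iSup₂_of_le ((1 - t₁) / x.2 - t₁ / x.1, 1 - (1 - t₁) / x.2) ⟨?_, ?_⟩ ?_
      · show (1 - t₁) / x.2 - t₁ / x.1 + (1 - (1 - t₁) / x.2) < 1
        have h : (1 - t₁) / x.2 - t₁ / x.1 + (1 - (1 - t₁) / x.2) = 1 - t₁ / x.1 := by ring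
        rw [h]
        have : 0 < t₁ / x.1 := div_pos ht0 hx1
        linarith
      · show 1 - (1 - t₁) / x.2 < 1
        have : 0 < (1 - t₁) / x.2 := div_pos (by linarith) hx2
        linarith
      · rw [EReal.coe_le_coe_iff]
        dsimp only
        have e1 : (1:ℝ) - ((1 - t₁) / x.2 - t₁ / x.1) - (1 - (1 - t₁) / x.2) = t₁ / x.1 := by
          ring
        have e2 : (1:ℝ) - (1 - (1 - t₁) / x.2) = (1 - t₁) / x.2 := by ring
        rw [e1, e2]
        have v1 : ((1 - t₁) / x.2 - t₁ / x.1 + (1 - (1 - t₁) / x.2)) * x.1 = x.1 - t₁ := by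
          field_simp
          ring
        have v2 : (1 - (1 - t₁) / x.2) * x.2 = x.2 - (1 - t₁) := by
          field_simp
        rw [v1, v2]
        have lx1 : Real.log x.1 = Real.log y + Real.log (x.1 + x.2) := by
          conv_lhs => rw [hx]
          rw [Real.log_mul hy0.ne' hpos.ne']
        have lx2 : Real.log x.2 = Real.log (1 - y) + Real.log (x.1 + x.2) := by
          conv_lhs => rw [hx2eq]
          rw [Real.log_mul (by linarith : (1:ℝ) - y ≠ 0) hpos.ne']
        have l1 : Real.log (t₁ / x.1) = Real.log (t₁ / y) - Real.log (x.1 + x.2) := by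
          rw [Real.log_div ht0.ne' hx1.ne', Real.log_div ht0.ne' hy0.ne', lx1]
          ring
        have l2 : Real.log ((1 - t₁) / x.2) =
            Real.log ((1 - t₁) / (1 - y)) - Real.log (x.1 + x.2) := by
          rw [Real.log_div (by linarith : (1:ℝ) - t₁ ≠ 0) hx2.ne',
            Real.log_div (by linarith : (1:ℝ) - t₁ ≠ 0) (by linarith : (1:ℝ) - y ≠ 0), lx2]
          ring
        rw [l1, l2]
        have hlog := Real.log_le_sub_one_of_pos hpos
        nlinarith [hlog]
end
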